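/- arXiv:1202.3585 — 7 statements merged into one kernel-verified Lean document; each statement's English description precedes it below -/
import Mathlib

section
/- If m is a left-invariant mean on an amenable group M and f is a homogeneous quasicharacter on M, then f(g) = m(h ↦ f(gh) − f(h)) for all g, and f is a group homomorphism M → ℝ. -/
/-!
Averaging the defect: `φ g := m (h ↦ f (g h) - f h)` is within the defect `C` of `f`, and left
invariance of `m` makes `φ` additive, since `f (g₁ g₂ h) - f h` splits as
`(f (g₁ (g₂ h)) - f (g₂ h)) + (f (g₂ h) - f h)`. Both `φ` and `f` are homogeneous, so
`n |φ g - f g| = |φ (gⁿ) - f (gⁿ)| ≤ C` for every `n`, which forces `φ = f`.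
-/

structure IsMean {X : Type*} (m : (X → ℝ) → ℝ) : Prop where
  map_add : ∀ F G : X → ℝ, (∃ B, ∀ x, |F x| ≤ B) → (∃ B, ∀ x, |G x| ≤ B) →
    m (F + G) = m F + m G
  map_smul : ∀ (c : ℝ) (F : X → ℝ), (∃ B, ∀ x, |F x| ≤ B) → m (c • F) = c * m F
  nonneg : ∀ F : X → ℝ, (∃ B, ∀ x, |F x| ≤ B) → (∀ x, 0 ≤ F x) → 0 ≤ m F
  map_one : m (fun _ => 1) = 1

lemma bounded_of_abs_sub_le {X : Type*} {F : X → ℝ} {c C : ℝ} (h : ∀ x, |F x - c| ≤ C) :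
    ∃ B, ∀ x, |F x| ≤ B :=
  ⟨|c| + C, fun x => by linarith [abs_sub_abs_le_abs_sub (F x) c, h x]⟩

namespace IsMean

variable {X : Type*} {m : (X → ℝ) → ℝ}

lemma map_const (hm : IsMean m) (c : ℝ) : m (fun _ => c) = c := by
  have h := hm.map_smul c (fun _ => 1) ⟨1, fun _ => by simp⟩
  rwa [hm.map_one, mul_one, show c • (fun _ : X => (1 : ℝ)) = fun _ => c by ext; simp] at h

lemma mono (hm : IsMean m) {F G : X → ℝ} (hF : ∃ B, ∀ x, |F x| ≤ B)
    (hG : ∃ B, ∀ x, |G x| ≤ B) (hFG : ∀ x, F x ≤ G x) : m F ≤ m G := by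
  obtain ⟨A, hA⟩ := hF
  obtain ⟨B, hB⟩ := hG
  have hdiff : ∃ B', ∀ x, |(G - F) x| ≤ B' :=
    ⟨B + A, fun x => (abs_sub _ _).trans (add_le_add (hB x) (hA x))⟩
  have hsplit : m G = m (G - F) + m F := by
    rw [← hm.map_add _ _ hdiff ⟨A, hA⟩, sub_add_cancel]
  linarith [hm.nonneg (G - F) hdiff fun x => sub_nonneg.mpr (hFG x)]

lemma abs_sub_le (hm : IsMean m) {F : X → ℝ} {c C : ℝ} (h : ∀ x, |F x - c| ≤ C) :
    |m F - c| ≤ C := by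
  have hF := bounded_of_abs_sub_le h
  have hconst (a : ℝ) : ∃ B, ∀ _ : X, |a| ≤ B := ⟨|a|, fun _ => le_rfl⟩
  have hlo := hm.mono (hconst (c - C)) hF fun x => by linarith [(abs_le.mp (h x)).1]
  have hhi := hm.mono hF (hconst (c + C)) fun x => by linarith [(abs_le.mp (h x)).2]
  rw [hm.map_const] at hlo hhi
  exact abs_le.mpr ⟨by linarith, by linarith⟩

end IsMean

section Quasimorphism

variable {M : Type*} [Group M]

lemma map_pow_of_map_mul {φ : M → ℝ} (hφ : ∀ a b, φ (a * b) = φ a + φ b) (g : M) (n : ℕ) :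
    φ (g ^ n) = n * φ g := by
  have hone : φ 1 = 0 := by simpa using hφ 1 1
  induction n with
  | zero => simpa using hone
  | succ k ih => rw [pow_succ, hφ, ih]; push_cast; ring

lemma eq_of_abs_sub_le_of_map_pow {φ f : M → ℝ} {C : ℝ} (hC : ∀ g, |φ g - f g| ≤ C)
    (hφ : ∀ (g : M) (n : ℕ), φ (g ^ n) = n * φ g) (hf : ∀ (g : M) (n : ℕ), f (g ^ n) = n * f g)
    (g : M) : φ g = f g := by
  by_contra hne
  have hpos : 0 < |φ g - f g| := abs_pos.mpr (sub_ne_zero.mpr hne)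
  obtain ⟨n, hn⟩ := exists_nat_gt (C / |φ g - f g|)
  have hbound : n * |φ g - f g| ≤ C := by
    have := hC (g ^ n)
    rwa [hφ, hf, ← mul_sub, abs_mul, Nat.abs_cast] at this
  rw [div_lt_iff₀ hpos] at hn
  linarith

variable (m : (M → ℝ) → ℝ) (f : M → ℝ)

def homogenization (g : M) : ℝ := m (fun h => f (g * h) - f h)

variable {m f} {C : ℝ}

lemma abs_sub_sub_le_of_defect (hC : ∀ g h : M, |f g + f h - f (g * h)| ≤ C) (g h : M) :
    |f (g * h) - f h - f g| ≤ C := by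
  rw [← abs_neg]; convert hC g h using 2; ring

lemma abs_homogenization_sub_le (hm : IsMean m)
    (hC : ∀ g h : M, |f g + f h - f (g * h)| ≤ C) (g : M) :
    |homogenization m f g - f g| ≤ C :=
  hm.abs_sub_le (abs_sub_sub_le_of_defect hC g)

lemma homogenization_mul (hm : IsMean m)
    (hinv : ∀ F : M → ℝ, (∃ B, ∀ x, |F x| ≤ B) → ∀ g : M, m (fun h => F (g * h)) = m F)
    (hC : ∀ g h : M, |f g + f h - f (g * h)| ≤ C) (g₁ g₂ : M) :
    homogenization m f (g₁ * g₂) = homogenization m f g₁ + homogenization m f g₂ := by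
  have hbdd (g : M) : ∃ B, ∀ h, |f (g * h) - f h| ≤ B :=
    bounded_of_abs_sub_le (abs_sub_sub_le_of_defect hC g)
  have hsplit : (fun h => f (g₁ * g₂ * h) - f h) =
      (fun h => f (g₁ * (g₂ * h)) - f (g₂ * h)) + fun h => f (g₂ * h) - f h := by
    ext h; simp only [Pi.add_apply, mul_assoc]; ring
  obtain ⟨B, hB⟩ := hbdd g₁
  rw [homogenization, hsplit, hm.map_add _ _ ⟨B, fun h => hB _⟩ (hbdd g₂),
    hinv _ (hbdd g₁)]
  rfl

end Quasimorphism

/-- If `m` is a left-invariant mean on an amenable group `M` and `f` a homogeneous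
quasicharacter on `M`, then `f g = m (h ↦ f (g h) - f h)` for all `g`, and `f` is a group
homomorphism `M → ℝ`. -/
theorem stmt_4 {M : Type*} [Group M] (m : (M → ℝ) → ℝ)
    (hadd : ∀ F G : M → ℝ, (∃ B, ∀ x, |F x| ≤ B) → (∃ B, ∀ x, |G x| ≤ B) →
      m (F + G) = m F + m G)
    (hsmul : ∀ (c : ℝ) (F : M → ℝ), (∃ B, ∀ x, |F x| ≤ B) → m (c • F) = c * m F)
    (hpos : ∀ F : M → ℝ, (∃ B, ∀ x, |F x| ≤ B) → (∀ x, 0 ≤ F x) → 0 ≤ m F)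
    (hone : m (fun _ => (1 : ℝ)) = 1)
    (hinv : ∀ F : M → ℝ, (∃ B, ∀ x, |F x| ≤ B) → ∀ g : M, m (fun h => F (g * h)) = m F)
    (f : M → ℝ)
    (hqc : ∃ C : ℝ, ∀ g h : M, |f g + f h - f (g * h)| ≤ C)
    (hhom : ∀ (g : M) (n : ℤ), f (g ^ n) = n * f g) :
    (∀ g : M, f g = m (fun h => f (g * h) - f h)) ∧
    (∀ g h : M, f (g * h) = f g + f h) := by
  obtain ⟨C, hC⟩ := hqc
  have hm : IsMean m := ⟨hadd, hsmul, hpos, hone⟩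
  have hmul := homogenization_mul hm hinv hC
  have hfpow (g : M) (n : ℕ) : f (g ^ n) = n * f g := by
    simpa only [zpow_natCast, Int.cast_natCast] using hhom g n
  have heq := eq_of_abs_sub_le_of_map_pow (abs_homogenization_sub_le hm hC)
    (map_pow_of_map_mul hmul) hfpow
  refine ⟨fun g => (heq g).symm, fun g h => ?_⟩
  rw [← heq, ← heq, ← heq, hmul]
end

section
/- Let H be a locally compact group and α ∈ Aut(H) a compacting automorphism (there exists a compact V ⊆ H such that for each g ∈ H, αⁿ(g) ∈ V for all sufficiently large n). Then H admits a compact subset A into which α is confining, i.e., α(A) ⊆ A, H = ⋃_{n≥0} α⁻ⁿ(A), and α^{n₀}(A·A) ⊆ A for some n₀ ≥ 0. -/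
/-!
By Baire's theorem one of the closed sets `{g | αⁿ g ∈ closure V for all n ≥ N}` has interior.
Finitely many left translates of it cover any compact `C`, so `αⁿ(C) ⊆ closure V * closure V =: W`
for all large `n`. Taking `m` with `αⁿ(W) ⊆ W` for `n ≥ m`, the compact set
`A = ⋃_{j ≤ m} αʲ(W)` is confining.
-/

open scoped Pointwise
open Filter Set

namespace MulAut

variable {H : Type*}

theorem coe_pow_eq_iterate [Mul H] (α : MulAut H) (n : ℕ) : ⇑(α ^ n) = (⇑α)^[n] := by
  induction n with
  | zero => rfl
  | succ n ih => ext; simp [pow_succ', ih, Function.iterate_succ_apply']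

variable [Group H] [TopologicalSpace H] {α : MulAut H}

theorem continuous_pow (hα : Continuous α) (n : ℕ) : Continuous ⇑(α ^ n) :=
  coe_pow_eq_iterate α n ▸ hα.iterate n

theorem exists_nonempty_interior_forall_ge_mem [BaireSpace H] (hα : Continuous α) {V : Set H}
    (hV : IsClosed V) (h : ∀ g, ∀ᶠ n in atTop, (α ^ n) g ∈ V) :
    ∃ N, (interior {g | ∀ n ≥ N, (α ^ n) g ∈ V}).Nonempty := by
  refine nonempty_interior_of_iUnion_of_closed (fun N => ?_) ?_
  · simp only [ofPred_forall]
    exact isClosed_biInter fun n _ => hV.preimage (continuous_pow hα n)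
  · exact iUnion_eq_univ_iff.2 fun g => eventually_atTop.1 (h g)

theorem eventually_image_subset_mul [IsTopologicalGroup H] {V : Set H}
    (h : ∀ g, ∀ᶠ n in atTop, (α ^ n) g ∈ V) {N : ℕ}
    (hN : (interior {g | ∀ n ≥ N, (α ^ n) g ∈ V}).Nonempty) {C : Set H} (hC : IsCompact C) :
    ∀ᶠ n in atTop, ⇑(α ^ n) '' C ⊆ V * V := by
  obtain ⟨t, hCt⟩ := compact_covered_by_mul_left_translates hC hN
  have ht : ∀ᶠ n in atTop, ∀ g ∈ t, (α ^ n) g⁻¹ ∈ V :=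
    (eventually_all_finset t).2 fun g _ => h g⁻¹
  filter_upwards [ht, eventually_ge_atTop N] with n hn hNn
  rintro _ ⟨x, hx, rfl⟩
  obtain ⟨g, hg, hgx⟩ : ∃ g ∈ t, ∀ m ≥ N, (α ^ m) (g * x) ∈ V := by simpa using hCt hx
  rw [show (α ^ n) x = (α ^ n) g⁻¹ * (α ^ n) (g * x) by rw [← map_mul, inv_mul_cancel_left]]
  exact mul_mem_mul (hn g hg) (hgx n hNn)

theorem exists_isCompact_eventually_image_subset [IsTopologicalGroup H] [LocallyCompactSpace H]
    (hα : Continuous α) {V : Set H} (hV : IsCompact V) (h : ∀ g, ∀ᶠ n in atTop, (α ^ n) g ∈ V) :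
    ∃ W : Set H, IsCompact W ∧ ∀ C, IsCompact C → ∀ᶠ n in atTop, ⇑(α ^ n) '' C ⊆ W := by
  have h' : ∀ g, ∀ᶠ n in atTop, (α ^ n) g ∈ closure V := fun g =>
    (h g).mono fun _ hn => subset_closure hn
  obtain ⟨N, hN⟩ := exists_nonempty_interior_forall_ge_mem hα isClosed_closure h'
  exact ⟨_, hV.closure.mul hV.closure, fun C hC => eventually_image_subset_mul h' hN hC⟩

theorem exists_confining_of_eventually_image_subset [ContinuousMul H] (hα : Continuous α)
    {W : Set H} (hW : IsCompact W) (h : ∀ C, IsCompact C → ∀ᶠ n in atTop, ⇑(α ^ n) '' C ⊆ W) :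
    ∃ A : Set H, IsCompact A ∧ ⇑α '' A ⊆ A ∧ (∀ g : H, ∃ n : ℕ, (α ^ n) g ∈ A) ∧
      ∃ n₀ : ℕ, ⇑(α ^ n₀) '' (A * A) ⊆ A := by
  obtain ⟨m, hm⟩ := eventually_atTop.1 (h W hW)
  set A := ⋃ j ∈ Iic m, ⇑(α ^ j) '' W
  have hWA : W ⊆ A := fun x hx => mem_biUnion (mem_Iic.2 m.zero_le) ⟨x, hx, by simp⟩
  have hA : IsCompact A :=
    (finite_Iic m).isCompact_biUnion fun j _ => hW.image (continuous_pow hα j)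
  refine ⟨A, hA, ?_, fun g => ?_, (h _ (hA.mul hA)).exists.imp fun _ hn => hn.trans hWA⟩
  · rintro _ ⟨y, hy, rfl⟩
    obtain ⟨j, hj, x, hx, rfl⟩ := mem_iUnion₂.1 hy
    rw [← MulAut.mul_apply, ← pow_succ']
    rcases (mem_Iic.1 hj).lt_or_eq with hjm | rfl
    · exact mem_biUnion (mem_Iic.2 hjm) ⟨x, hx, rfl⟩
    · exact hWA (hm (j + 1) j.le_succ ⟨x, hx, rfl⟩)
  · exact (h {g} isCompact_singleton).exists.imp fun _ hn => hWA (hn (mem_image_of_mem _ rfl))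

end MulAut

theorem stmt_7_general {H : Type*} [Group H] [TopologicalSpace H] [IsTopologicalGroup H]
    [LocallyCompactSpace H]
    (α : MulAut H) (hc : Continuous ⇑α)
    (hcpt : ∃ V : Set H, IsCompact V ∧
      ∀ g : H, ∃ N : ℕ, ∀ n : ℕ, N < n → (α ^ n) g ∈ V) :
    ∃ A : Set H, IsCompact A ∧ ⇑α '' A ⊆ A ∧ (∀ g : H, ∃ n : ℕ, (α ^ n) g ∈ A) ∧
      ∃ n₀ : ℕ, ⇑(α ^ n₀) '' (A * A) ⊆ A := by
  obtain ⟨V, hV, hVg⟩ := hcpt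
  obtain ⟨W, hW, hWC⟩ := MulAut.exists_isCompact_eventually_image_subset hc hV fun g =>
    (hVg g).elim fun N hN => (eventually_gt_atTop N).mono hN
  exact MulAut.exists_confining_of_eventually_image_subset hc hW hWC

/-- A compacting automorphism of a locally compact group is confining into some compact
subset: there is a compact `A` with `α(A) ⊆ A`, `H = ⋃_{n≥0} α⁻ⁿ(A)` and
`α^{n₀}(A·A) ⊆ A` for some `n₀ ≥ 0`. -/
theorem stmt_7 {H : Type*} [Group H] [TopologicalSpace H] [IsTopologicalGroup H]
    [LocallyCompactSpace H] [T2Space H]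
    (α : MulAut H) (hc : Continuous ⇑α) (hc' : Continuous ⇑α.symm)
    (hcpt : ∃ V : Set H, IsCompact V ∧
      ∀ g : H, ∃ N : ℕ, ∀ n : ℕ, N < n → (α ^ n) g ∈ V) :
    ∃ A : Set H, IsCompact A ∧ ⇑α '' A ⊆ A ∧ (∀ g : H, ∃ n : ℕ, (α ^ n) g ∈ A) ∧
      ∃ n₀ : ℕ, ⇑(α ^ n₀) '' (A * A) ⊆ A :=
  stmt_7_general α hc hcpt
end

section
/- Let α be a compacting automorphism of a locally compact group H with compact vacuum set Ω (for every compact M ⊆ H, αⁿ(M) ⊆ Ω for all sufficiently large n). Then L = ⋂_{n∈ℤ} αⁿ(Ω) is a compact α-invariant subgroup of H, and it contains every α-invariant compact subgroup of H. -/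
/-!
Since `α` eventually maps `Ω * Ω` into `Ω`, every `x, y ∈ L` can be written, at every level `n`,
as `αⁿ⁺ᵏ a`, `αⁿ⁺ᵏ b` with `a, b ∈ Ω`, so `x * y = αⁿ (αᵏ (a * b)) ∈ αⁿ Ω`; symmetry of `Ω` gives
inverses. Reindexing the intersection shows `L` is `α`-invariant, and `L ⊆ Ω` is an intersection
of compact sets. An `α`-invariant compact `K` is pushed into `Ω` by some power of `α`, hence
`K ⊆ Ω`, and invariance under all powers gives `K ⊆ αⁿ Ω` for every `n`.
-/

open scoped Pointwise

open Set

section Action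

variable {G X : Type*} [Group G] [MulAction G X]

lemma smul_iInter_zpow_smul (g : G) (S : Set X) :
    g • ⋂ n : ℤ, g ^ n • S = ⋂ n : ℤ, g ^ n • S := by
  simp_rw [smul_set_iInter, smul_smul, ← zpow_one_add]
  exact (Equiv.addLeft (1 : ℤ)).surjective.iInter_comp fun n => g ^ n • S

lemma zpow_smul_eq_of_smul_eq {g : G} {K : Set X} (hK : g • K = K) (n : ℤ) : g ^ n • K = K :=
  (MulAction.mem_stabilizer_iff.mp
    (zpow_mem (MulAction.mem_stabilizer_iff.mpr hK) n : g ^ n ∈ MulAction.stabilizer G K))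

lemma subset_iInter_zpow_smul_of_smul_eq {g : G} {K Ω : Set X} (hK : g • K = K) (k : ℕ)
    (hkK : g ^ k • K ⊆ Ω) : K ⊆ ⋂ n : ℤ, g ^ n • Ω := by
  rw [← zpow_natCast, zpow_smul_eq_of_smul_eq hK] at hkK
  exact subset_iInter fun n => zpow_smul_eq_of_smul_eq hK n ▸ smul_set_mono hkK

end Action

section DistribAction

variable {G H : Type*} [Group G] [Group H] [MulDistribMulAction G H]

lemma exists_subgroup_coe_eq_iInter_zpow_smul (g : G) {Ω : Set H} (hΩone : (1 : H) ∈ Ω)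
    (hΩsymm : Ω⁻¹ = Ω) (k : ℕ) (hk : g ^ k • (Ω * Ω) ⊆ Ω) :
    ∃ L : Subgroup H, (L : Set H) = ⋂ n : ℤ, g ^ n • Ω := by
  refine ⟨{ carrier := ⋂ n : ℤ, g ^ n • Ω, one_mem' := ?one, mul_mem' := ?mul, inv_mem' := ?inv },
    rfl⟩
  case one => exact mem_iInter.mpr fun n => ⟨1, hΩone, smul_one _⟩
  case mul =>
    intro x y hx hy
    refine mem_iInter.mpr fun n => ?_
    obtain ⟨a, ha, rfl⟩ := mem_iInter.mp hx (n + k)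
    obtain ⟨b, hb, rfl⟩ := mem_iInter.mp hy (n + k)
    refine ⟨g ^ k • (a * b), hk (smul_mem_smul_set (mul_mem_mul ha hb)), ?_⟩
    simp only [smul_smul, ← zpow_natCast, ← zpow_add, smul_mul']
  case inv =>
    intro x hx
    refine mem_iInter.mpr fun n => ?_
    obtain ⟨a, ha, rfl⟩ := mem_iInter.mp hx n
    exact ⟨a⁻¹, hΩsymm ▸ inv_mem_inv.mpr ha, smul_inv' _ _⟩

end DistribAction

lemma MulAut.continuous_zpow {H : Type*} [Group H] [TopologicalSpace H] {α : MulAut H}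
    (hc : Continuous ⇑α) (hc' : Continuous ⇑α.symm) (n : ℤ) : Continuous ⇑(α ^ n) := by
  induction n using Int.induction_on with
  | zero => exact continuous_id
  | succ k ih => rw [zpow_add_one]; exact ih.comp hc
  | pred k ih => rw [zpow_sub_one]; exact ih.comp hc'

lemma MulAut.isCompact_iInter_zpow_image {H : Type*} [Group H] [TopologicalSpace H] [T2Space H]
    {α : MulAut H} (hc : Continuous ⇑α) (hc' : Continuous ⇑α.symm) {Ω : Set H}
    (hΩ : IsCompact Ω) : IsCompact (⋂ n : ℤ, ⇑(α ^ n) '' Ω) :=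
  hΩ.of_isClosed_subset
    (isClosed_iInter fun n => (hΩ.image (MulAut.continuous_zpow hc hc' n)).isClosed)
    (by simpa using iInter_subset (fun n : ℤ => ⇑(α ^ n) '' Ω) 0)

theorem stmt_8_general {H : Type*} [Group H] [TopologicalSpace H] [IsTopologicalGroup H]
    [T2Space H]
    (α : MulAut H) (hc : Continuous ⇑α) (hc' : Continuous ⇑α.symm)
    (Ω : Set H) (hΩc : IsCompact Ω) (hΩsymm : Ω⁻¹ = Ω) (hΩone : (1 : H) ∈ Ω)
    (hvac : ∀ M : Set H, IsCompact M → ∃ N : ℕ, ∀ n : ℕ, N < n → ⇑(α ^ n) '' M ⊆ Ω) :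
    ∃ L : Subgroup H, (L : Set H) = ⋂ n : ℤ, ⇑(α ^ n) '' Ω ∧
      IsCompact (L : Set H) ∧ ⇑α '' (L : Set H) = (L : Set H) ∧
      ∀ K : Subgroup H, IsCompact (K : Set H) → ⇑α '' (K : Set H) = (K : Set H) → K ≤ L := by
  -- `β • S` for `β : MulAut H` unfolds to `⇑β '' S`, so the pointwise lemmas apply as they stand.
  obtain ⟨k, hk⟩ := hvac (Ω * Ω) (hΩc.mul hΩc)
  obtain ⟨L, hL⟩ :=
    exists_subgroup_coe_eq_iInter_zpow_smul α hΩone hΩsymm (k + 1) (hk (k + 1) k.lt_succ_self)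
  refine ⟨L, hL, hL ▸ MulAut.isCompact_iInter_zpow_image hc hc' hΩc,
    hL ▸ smul_iInter_zpow_smul α Ω, fun K hK hKα => ?_⟩
  obtain ⟨m, hm⟩ := hvac K hK
  rw [← SetLike.coe_subset_coe, hL]
  exact subset_iInter_zpow_smul_of_smul_eq hKα (m + 1) (hm (m + 1) m.lt_succ_self)

/-- If `Ω` is a compact (symmetric, containing 1) vacuum set for the compaction `α` of the
locally compact group `H`, then `L = ⋂_{n∈ℤ} αⁿ(Ω)` is a compact `α`-invariant subgroup of
`H` containing every `α`-invariant compact subgroup. -/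
theorem stmt_8 {H : Type*} [Group H] [TopologicalSpace H] [IsTopologicalGroup H]
    [LocallyCompactSpace H] [T2Space H]
    (α : MulAut H) (hc : Continuous ⇑α) (hc' : Continuous ⇑α.symm)
    (Ω : Set H) (hΩc : IsCompact Ω) (hΩsymm : Ω⁻¹ = Ω) (hΩone : (1 : H) ∈ Ω)
    (hvac : ∀ M : Set H, IsCompact M → ∃ N : ℕ, ∀ n : ℕ, N < n → ⇑(α ^ n) '' M ⊆ Ω) :
    ∃ L : Subgroup H, (L : Set H) = ⋂ n : ℤ, ⇑(α ^ n) '' Ω ∧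
      IsCompact (L : Set H) ∧ ⇑α '' (L : Set H) = (L : Set H) ∧
      ∀ K : Subgroup H, IsCompact (K : Set H) → ⇑α '' (K : Set H) = (K : Set H) → K ≤ L :=
  stmt_8_general α hc hc' Ω hΩc hΩsymm hΩone hvac
end

section
/- Let K be a compact normal subgroup of a locally compact group H invariant under α ∈ Aut(H). Then α is compacting on H if and only if the induced automorphism of H/K is compacting. -/
/-! The quotient map `H → H ⧸ K` intertwines `α` with the induced automorphism and, as `K` is
compact, is proper. Continuous surjections push absorbing compact sets forward and proper maps pull
them back, so compacting transfers in both directions. -/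

/-- `f` is a compacting self-map: some compact `V` eventually absorbs every forward orbit. -/
def CompactingFun {X : Type*} [TopologicalSpace X] (f : X → X) : Prop :=
  ∃ V : Set X, IsCompact V ∧ ∀ g : X, ∃ N : ℕ, ∀ n : ℕ, N < n → f^[n] g ∈ V

open Function

section Compacting

variable {X Y : Type*} [TopologicalSpace X] [TopologicalSpace Y] {π : X → Y} {f : X → X}
  {g : Y → Y}

theorem CompactingFun.of_semiconj (hπ : Semiconj π f g) (hcont : Continuous π)
    (hsurj : Surjective π) (hf : CompactingFun f) : CompactingFun g := by
  obtain ⟨V, hV, hVabs⟩ := hf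
  refine ⟨π '' V, hV.image hcont, hsurj.forall.2 fun x => ?_⟩
  obtain ⟨N, hN⟩ := hVabs x
  exact ⟨N, fun n hn => (hπ.iterate_right n).eq x ▸ Set.mem_image_of_mem π (hN n hn)⟩

theorem CompactingFun.of_semiconj_of_isProperMap (hπ : Semiconj π f g) (hprop : IsProperMap π)
    (hg : CompactingFun g) : CompactingFun f := by
  obtain ⟨W, hW, hWabs⟩ := hg
  refine ⟨π ⁻¹' W, hprop.isCompact_preimage hW, fun x => ?_⟩
  obtain ⟨N, hN⟩ := hWabs (π x)
  exact ⟨N, fun n hn => by rw [Set.mem_preimage, (hπ.iterate_right n).eq x]; exact hN n hn⟩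

theorem compactingFun_iff_of_semiconj (hπ : Semiconj π f g) (hprop : IsProperMap π)
    (hsurj : Surjective π) : CompactingFun f ↔ CompactingFun g :=
  ⟨.of_semiconj hπ hprop.continuous hsurj, .of_semiconj_of_isProperMap hπ hprop⟩

end Compacting

theorem QuotientGroup.isProperMap_coe {G : Type*} [Group G] [TopologicalSpace G]
    [IsTopologicalGroup G] {K : Subgroup G} (hK : IsCompact (K : Set G)) :
    IsProperMap ((↑) : G → G ⧸ K) := by
  refine isProperMap_iff_isClosedMap_and_compact_fibers.2
    ⟨continuous_mk, isClosedMap_coe hK, QuotientGroup.mk_surjective.forall.2 fun g => ?_⟩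
  rw [← Set.image_singleton, preimage_image_mk_eq_mul]
  exact isCompact_singleton.mul hK

theorem stmt_10_general {H : Type*} [Group H] [TopologicalSpace H] [IsTopologicalGroup H]
    (α : MulAut H)
    (K : Subgroup H) [K.Normal] (hKc : IsCompact (K : Set H))
    (hinv : ∀ k : H, k ∈ K ↔ α k ∈ K) :
    CompactingFun ⇑α ↔
      CompactingFun
        ⇑(QuotientGroup.map K K α.toMonoidHom (fun k hk => (hinv k).mp hk)) :=
  compactingFun_iff_of_semiconj (fun _ => rfl) (QuotientGroup.isProperMap_coe hKc)
    QuotientGroup.mk_surjective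

/-- If `K` is a compact normal `α`-invariant subgroup of a locally compact group `H`, then
`α` is compacting on `H` iff the induced automorphism of `H ⧸ K` is compacting. -/
theorem stmt_10 {H : Type*} [Group H] [TopologicalSpace H] [IsTopologicalGroup H]
    [LocallyCompactSpace H] [T2Space H]
    (α : MulAut H) (hc : Continuous ⇑α) (hc' : Continuous ⇑α.symm)
    (K : Subgroup H) [K.Normal] (hKc : IsCompact (K : Set H))
    (hinv : ∀ k : H, k ∈ K ↔ α k ∈ K) :
    CompactingFun ⇑α ↔
      CompactingFun
        ⇑(QuotientGroup.map K K α.toMonoidHom (fun k hk => (hinv k).mp hk)) :=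
  stmt_10_general α K hKc hinv
end

section
/- If a locally compact group H admits a compacting automorphism α, then H has polynomial growth: for every compact subset V of H, the Haar measure of Vⁿ is bounded by a polynomial in n of degree depending only on H and α. Concretely, if α(V·V) ⊆ V and α scales left Haar measure by 1/c with c ≥ 1, then λ(Vⁿ) ≤ λ(V)·c·n^{log₂ c} for all n ≥ 1. -/
/-!
Iterating `α(V·V) ⊆ V` gives `αᵏ(V^(2ᵏ)) ⊆ V`, and `α` divides Haar measure by `c`, so
`λ(V^(2ᵏ)) ≤ cᵏ·λ(V)`. Left invariance makes `m ↦ λ(Vᵐ)` monotone (`Vᵐ` contains a translate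
of `Vˡ` for `l ≤ m`), so with `k = ⌊log₂ n⌋ + 1`, i.e. `n < 2ᵏ`, we get
`λ(Vⁿ) ≤ λ(V)·c·c^⌊log₂ n⌋ ≤ λ(V)·c·c^(log₂ n) = λ(V)·c·n^(log₂ c)`.
-/

open scoped Pointwise NNReal ENNReal
open MeasureTheory

theorem Set.image_iterate_pow_two_pow_subset {M F : Type*} [Monoid M] [FunLike F M M]
    [MonoidHomClass F M M] {f : F} {V : Set M} (hV : f '' (V * V) ⊆ V) :
    ∀ k : ℕ, (⇑f)^[k] '' (V ^ 2 ^ k) ⊆ V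
  | 0 => by simp
  | k + 1 => by
    have hstep : f '' (V ^ 2 ^ (k + 1)) ⊆ V ^ 2 ^ k := by
      rw [pow_succ', pow_mul, sq, Set.image_pow]
      exact Set.pow_subset_pow_left hV
    rw [Function.iterate_succ, Set.image_comp]
    exact (Set.image_mono hstep).trans (image_iterate_pow_two_pow_subset hV k)

theorem MeasureTheory.measure_eq_pow_mul_measure_image_iterate {X : Type*} [MeasurableSpace X]
    (μ : Measure X) {f : X → X} {c : ℝ≥0∞} (hf : ∀ s, μ s = c * μ (f '' s)) :
    ∀ (k : ℕ) (s : Set X), μ s = c ^ k * μ (f^[k] '' s)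
  | 0, s => by simp
  | k + 1, s => by
    rw [Function.iterate_succ, Set.image_comp, pow_succ', mul_assoc,
      ← measure_eq_pow_mul_measure_image_iterate μ hf k, ← hf]

theorem MeasureTheory.measure_pow_le_measure_pow {G : Type*} [Group G] [MeasurableSpace G]
    [MeasurableMul G] (μ : Measure G) [μ.IsMulLeftInvariant] {V : Set G} {l m : ℕ}
    (hl : l ≠ 0) (hlm : l ≤ m) : μ (V ^ l) ≤ μ (V ^ m) := by
  obtain rfl | ⟨v, hv⟩ := V.eq_empty_or_nonempty
  · simp [Set.empty_pow hl]
  calc μ (V ^ l) = μ (v ^ (m - l) • V ^ l) := (measure_smul μ _ _).symm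
    _ ≤ μ (V ^ (m - l) * V ^ l) := measure_mono (Set.smul_set_subset_mul (Set.pow_mem_pow hv))
    _ = μ (V ^ m) := by rw [← pow_add, Nat.sub_add_cancel hlm]

theorem Real.rpow_logb_comm {b x y : ℝ} (hx : 0 < x) (hy : 0 < y) :
    x ^ logb b y = y ^ logb b x := by
  rw [rpow_def_of_pos hx, rpow_def_of_pos hy, logb, logb]
  ring_nf

theorem Real.pow_log_le_rpow_logb {c : ℝ} (hc : 1 ≤ c) {n : ℕ} (hn : n ≠ 0) :
    c ^ Nat.log 2 n ≤ (n : ℝ) ^ logb 2 c :=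
  calc c ^ Nat.log 2 n = c ^ (Nat.log 2 n : ℝ) := (rpow_natCast c _).symm
    _ ≤ c ^ logb 2 n := rpow_le_rpow_of_exponent_le hc (natLog_le_logb n 2)
    _ = (n : ℝ) ^ logb 2 c := rpow_logb_comm (by positivity) (by positivity)

theorem ENNReal.pow_log_le_rpow_logb {c : ℝ≥0} (hc : 1 ≤ c) {n : ℕ} (hn : n ≠ 0) :
    (c : ℝ≥0∞) ^ Nat.log 2 n ≤ (n : ℝ≥0∞) ^ Real.logb 2 c := by
  rw [← ofReal_coe_nnreal, ← ofReal_pow c.coe_nonneg, ← ofReal_natCast,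
    ofReal_rpow_of_pos (by positivity)]
  exact ofReal_le_ofReal (Real.pow_log_le_rpow_logb hc hn)

theorem stmt_11_general {H : Type*} [Group H] [TopologicalSpace H] [IsTopologicalGroup H]
    [MeasurableSpace H] [BorelSpace H]
    (μ : MeasureTheory.Measure H) [μ.IsHaarMeasure]
    (α : MulAut H) (V : Set H) (hV : ⇑α '' (V * V) ⊆ V)
    (c : NNReal) (hc1 : 1 ≤ c)
    (hscale : ∀ s : Set H, μ (⇑α '' s) = μ s / (c : ENNReal)) :
    ∀ n : ℕ, 1 ≤ n → μ (V ^ n) ≤ μ V * (c : ENNReal) * (n : ENNReal) ^ (Real.logb 2 (c : ℝ)) := by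
  intro n hn
  have hc0 : (c : ℝ≥0∞) ≠ 0 := by simpa using (zero_lt_one.trans_le hc1).ne'
  have hα_mul : ∀ s, μ s = c * μ (α '' s) := fun s => by
    rw [hscale, ENNReal.mul_div_cancel hc0 ENNReal.coe_ne_top]
  set k := Nat.log 2 n
  calc μ (V ^ n) ≤ μ (V ^ 2 ^ (k + 1)) :=
        measure_pow_le_measure_pow μ (by omega) (Nat.lt_pow_succ_log_self one_lt_two n).le
    _ = c ^ (k + 1) * μ ((⇑α)^[k + 1] '' V ^ 2 ^ (k + 1)) :=
        measure_eq_pow_mul_measure_image_iterate μ hα_mul _ _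
    _ ≤ c ^ (k + 1) * μ V := by gcongr; exact Set.image_iterate_pow_two_pow_subset hV _
    _ = μ V * c * c ^ k := by ring
    _ ≤ μ V * c * (n : ℝ≥0∞) ^ Real.logb 2 c := by
        gcongr; exact ENNReal.pow_log_le_rpow_logb hc1 (by omega)

/-- A locally compact group with a compacting automorphism has polynomial growth:
if `V` is compact with `α(V·V) ⊆ V` and `α` scales left Haar measure by `1/c` (`c ≥ 1`),
then `λ(Vⁿ) ≤ λ(V)·c·n^{log₂ c}` for all `n ≥ 1`. -/
theorem stmt_11 {H : Type*} [Group H] [TopologicalSpace H] [IsTopologicalGroup H]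
    [LocallyCompactSpace H] [T2Space H] [MeasurableSpace H] [BorelSpace H]
    (μ : MeasureTheory.Measure H) [μ.IsHaarMeasure]
    (α : MulAut H) (hc : Continuous ⇑α) (hc' : Continuous ⇑α.symm)
    (hcpt : ∃ W : Set H, IsCompact W ∧ ∀ g : H, ∃ N : ℕ, ∀ n : ℕ, N < n → (α ^ n) g ∈ W)
    (V : Set H) (hVc : IsCompact V) (hV : ⇑α '' (V * V) ⊆ V)
    (c : NNReal) (hc1 : 1 ≤ c)
    (hscale : ∀ s : Set H, μ (⇑α '' s) = μ s / (c : ENNReal)) :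
    ∀ n : ℕ, 1 ≤ n → μ (V ^ n) ≤ μ V * (c : ENNReal) * (n : ENNReal) ^ (Real.logb 2 (c : ℝ)) :=
  stmt_11_general μ α V hV c hc1 hscale
end

section
/- Let X be a proper geodesic hyperbolic metric space, G ≤ Isom(X) a closed subgroup whose orbits are quasi-convex, and suppose the limit set ∂_X G equals all of ∂X. Then G acts cocompactly on X. -/
open Filter

/-- The Gromov product `(y|z)_x`. -/
noncomputable def gp {X : Type*} [MetricSpace X] (x y z : X) : ℝ :=
  (dist x y + dist x z - dist y z) / 2

/-!
If the orbit `G • x₀` were not coarsely dense, there would be points `yₙ` at distance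
`≥ n` from it, translated so that `x₀` is almost a nearest orbit point. By properness,
geodesics from `x₀` to `yₙ` subconverge to a geodesic ray `u` from `x₀` with
`d(u k, G • x₀) ≥ k - 1`. As `∂_X G = ∂X`, there are orbit points `gₖ • x₀` with
`(u k | gₖ • x₀)_{x₀} → ∞`, so by hyperbolicity the geodesic `[x₀, gₖ • x₀]` fellow-travels
`u` for a long time and leaves every bounded neighbourhood of the orbit.

This contradicts a Morse-type property of chain-quasi-convex sets `S`: geodesics between points
of `S` stay uniformly close to `S`. At a point `m` of such a geodesic farthest from `S`, at
distance `D`, one builds a `c`-chain of `O(D)` steps joining two points of the geodesic on either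
side of `m` and avoiding the ball of radius `D - 1` about `m`. A geodesic lies within
`4δ (log₂ n + 1) + c` of any `c`-chain of `n` steps joining its endpoints (bisect the chain and
use thin triangles), so `D - 1 ≤ 4δ log₂ O(D) + O(1)`, which bounds `D`.
-/

open Set Metric Topology

section

variable {X : Type*} [MetricSpace X]

lemma gp_comm (x y z : X) : gp x y z = gp x z y := by
  simp only [gp, dist_comm y z]
  ring

lemma gp_le_dist_left (x y z : X) : gp x y z ≤ dist x y := by
  have := dist_triangle x y z
  simp only [gp]
  linarith

lemma gp_le_dist_right (x y z : X) : gp x y z ≤ dist x z := by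
  rw [gp_comm]
  exact gp_le_dist_left x z y

def IsGromovHyperbolic (δ : ℝ) (X : Type*) [MetricSpace X] : Prop :=
  ∀ x y z w : X, min (gp x y w) (gp x w z) - δ ≤ gp x y z

namespace IsGromovHyperbolic

variable {δ : ℝ} (hX : IsGromovHyperbolic δ X)
include hX

lemma nonneg [Nonempty X] : 0 ≤ δ := by
  obtain ⟨x⟩ := ‹Nonempty X›
  simpa [gp] using hX x x x x

lemma min_min_sub_le (x p a b q : X) :
    min (gp x p a) (min (gp x a b) (gp x b q)) - 2 * δ ≤ gp x p q := by
  have : Nonempty X := ⟨x⟩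
  have hδ := hX.nonneg
  have h₁ := hX x a q b
  have h₂ := hX x p q a
  have hmin : min (gp x p a) (min (gp x a b) (gp x b q)) - δ ≤ min (gp x p a) (gp x a q) :=
    le_min (by linarith [min_le_left (gp x p a) (min (gp x a b) (gp x b q))])
      (by linarith [min_le_right (gp x p a) (min (gp x a b) (gp x b q))])
  linarith

lemma dist_le_of_le_gp {x p a b q : X} {t : ℝ} (hp : dist x p = t) (hq : dist x q = t)
    (hpa : t ≤ gp x p a) (hab : t ≤ gp x a b) (hbq : t ≤ gp x b q) : dist p q ≤ 4 * δ := by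
  have := hX.min_min_sub_le x p a b q
  have := le_min hpa (le_min hab hbq)
  simp only [gp, hp, hq] at *
  linarith

end IsGromovHyperbolic

def IsGeodesicSegment (f : ℝ → X) (a b : X) : Prop :=
  f 0 = a ∧ f (dist a b) = b ∧
    ∀ s t, s ∈ Icc 0 (dist a b) → t ∈ Icc 0 (dist a b) → dist (f s) (f t) = |s - t|

namespace IsGeodesicSegment

variable {f : ℝ → X} {a b : X} {s t : ℝ}

lemma dist_eq (hf : IsGeodesicSegment f a b) (hs : s ∈ Icc 0 (dist a b))
    (ht : t ∈ Icc 0 (dist a b)) : dist (f s) (f t) = |s - t| :=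
  hf.2.2 s t hs ht

lemma dist_left (hf : IsGeodesicSegment f a b) (ht : t ∈ Icc 0 (dist a b)) :
    dist a (f t) = t := by
  rw [← hf.1, hf.dist_eq ⟨le_rfl, dist_nonneg⟩ ht, zero_sub, abs_neg, abs_of_nonneg ht.1]

lemma dist_right (hf : IsGeodesicSegment f a b) (ht : t ∈ Icc 0 (dist a b)) :
    dist (f t) b = dist a b - t := by
  conv_lhs => rw [← hf.2.1]
  rw [hf.dist_eq ht ⟨dist_nonneg, le_rfl⟩, abs_of_nonpos (by linarith [ht.2]), neg_sub]

lemma gp_eq (hf : IsGeodesicSegment f a b) (ht : t ∈ Icc 0 (dist a b)) :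
    gp a (f t) b = t := by
  simp only [gp, hf.dist_left ht, hf.dist_right ht]
  ring

lemma reverse (hf : IsGeodesicSegment f a b) :
    IsGeodesicSegment (fun s => f (dist a b - s)) b a := by
  have hmem : ∀ {s}, s ∈ Icc 0 (dist b a) → dist a b - s ∈ Icc 0 (dist a b) := by
    intro s hs
    rw [dist_comm] at hs
    constructor <;> linarith [hs.1, hs.2]
  refine ⟨by simpa using hf.2.1, by simpa [dist_comm b a] using hf.1, fun s t hs ht => ?_⟩
  rw [hf.dist_eq (hmem hs) (hmem ht), ← abs_neg]
  ring_nf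

lemma restrict (hf : IsGeodesicSegment f a b) (hs : s ∈ Icc 0 (dist a b))
    (ht : t ∈ Icc s (dist a b)) : IsGeodesicSegment (fun r => f (s + r)) (f s) (f t) := by
  have hst : dist (f s) (f t) = t - s := by
    rw [hf.dist_eq hs ⟨hs.1.trans ht.1, ht.2⟩, abs_of_nonpos (by linarith [ht.1]), neg_sub]
  have hmem : ∀ {r}, r ∈ Icc 0 (dist (f s) (f t)) → s + r ∈ Icc 0 (dist a b) := by
    intro r hr
    rw [hst] at hr
    constructor <;> linarith [hr.1, hr.2, hs.1, ht.2]
  refine ⟨by simp, by simp only [hst, add_sub_cancel], fun r r' hr hr' => ?_⟩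
  rw [hf.dist_eq (hmem hr) (hmem hr'), add_sub_add_left_eq_sub]

lemma continuousOn (hf : IsGeodesicSegment f a b) : ContinuousOn f (Icc 0 (dist a b)) :=
  (LipschitzOnWith.of_dist_le_mul (K := 1) fun s hs t ht => by
    simp [hf.dist_eq hs ht, Real.dist_eq]).continuousOn

end IsGeodesicSegment

namespace IsGromovHyperbolic

variable {δ : ℝ} (hX : IsGromovHyperbolic δ X)
include hX

lemma dist_le_of_isGeodesicSegment {x a b : X} {f g : ℝ → X} (hf : IsGeodesicSegment f x a)
    (hg : IsGeodesicSegment g x b) {t : ℝ} (ht₀ : 0 ≤ t) (ht : t ≤ gp x a b) :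
    dist (f t) (g t) ≤ 4 * δ := by
  have hta : t ∈ Icc 0 (dist x a) := ⟨ht₀, ht.trans (gp_le_dist_left _ _ _)⟩
  have htb : t ∈ Icc 0 (dist x b) := ⟨ht₀, ht.trans (gp_le_dist_right _ _ _)⟩
  exact hX.dist_le_of_le_gp (hf.dist_left hta) (hg.dist_left htb) (hf.gp_eq hta).ge ht
    (by rw [gp_comm, hg.gp_eq htb])

lemma exists_dist_le_of_isGeodesicSegment {a b w : X} {f f₁ f₂ : ℝ → X}
    (hf : IsGeodesicSegment f a b) (hf₁ : IsGeodesicSegment f₁ a w)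
    (hf₂ : IsGeodesicSegment f₂ w b) {t : ℝ} (ht : t ∈ Icc 0 (dist a b)) :
    ∃ t', (t' ∈ Icc 0 (dist a w) ∧ dist (f t) (f₁ t') ≤ 4 * δ) ∨
      (t' ∈ Icc 0 (dist w b) ∧ dist (f t) (f₂ t') ≤ 4 * δ) := by
  rcases le_or_gt t (gp a b w) with hle | hlt
  · exact ⟨t, .inl ⟨⟨ht.1, hle.trans (gp_le_dist_right _ _ _)⟩,
      hX.dist_le_of_isGeodesicSegment hf hf₁ ht.1 hle⟩⟩
  · have hgp : gp b a w = dist a b - gp a b w := by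
      simp only [gp, dist_comm b a, dist_comm b w]
      ring
    have hs : dist a b - t ≤ gp b a w := by linarith
    have := hX.dist_le_of_isGeodesicSegment hf.reverse hf₂.reverse (by linarith [ht.2]) hs
    refine ⟨dist w b - (dist a b - t), .inr ⟨⟨?_, by linarith [ht.2]⟩, ?_⟩⟩
    · linarith [gp_le_dist_right b a w, dist_comm b w]
    · simpa using this

end IsGromovHyperbolic

def JoinedByChain (c : ℝ) (P : X → Prop) (n : ℕ) (p q : X) : Prop :=
  ∃ σ : ℕ → X, σ 0 = p ∧ σ n = q ∧ (∀ i < n, dist (σ i) (σ (i + 1)) ≤ c) ∧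
    ∀ i ≤ n, P (σ i)

namespace JoinedByChain

variable {c c' : ℝ} {P P' : X → Prop} {n m : ℕ} {p q r : X}

lemma left (h : JoinedByChain c P n p q) : P p := by
  obtain ⟨σ, rfl, -, -, hP⟩ := h
  exact hP 0 n.zero_le

lemma dist_le_of_le_one (h : JoinedByChain c P n p q) (hc : 0 ≤ c) (hn : n ≤ 1) :
    dist p q ≤ c := by
  obtain ⟨σ, rfl, rfl, hstep, -⟩ := h
  interval_cases n
  · simpa using hc
  · exact hstep 0 one_pos

lemma mono (h : JoinedByChain c P n p q) (hc : c ≤ c') (hP : ∀ x, P x → P' x) :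
    JoinedByChain c' P' n p q := by
  obtain ⟨σ, h0, hn, hstep, hσ⟩ := h
  exact ⟨σ, h0, hn, fun i hi => (hstep i hi).trans hc, fun i hi => hP _ (hσ i hi)⟩

lemma symm (h : JoinedByChain c P n p q) : JoinedByChain c P n q p := by
  obtain ⟨σ, h0, hn, hstep, hσ⟩ := h
  refine ⟨fun i => σ (n - i), by simpa, by simpa, fun i hi => ?_,
    fun i _ => hσ _ (n.sub_le i)⟩
  simp only
  rw [dist_comm, show n - i = n - (i + 1) + 1 by omega]
  exact hstep _ (by omega)

lemma trans (h₁ : JoinedByChain c P n p q) (h₂ : JoinedByChain c P m q r) :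
    JoinedByChain c P (n + m) p r := by
  obtain ⟨σ, h0, hn, hstep, hσ⟩ := h₁
  obtain ⟨τ, h0', hm, hstep', hτ⟩ := h₂
  refine ⟨fun i => if i ≤ n then σ i else τ (i - n), by simpa, ?_, fun i hi => ?_,
    fun i hi => ?_⟩
  · rcases m.eq_zero_or_pos with rfl | hm0
    · simp [hn, ← h0', hm]
    · simp [show ¬ n + m ≤ n by omega, hm]
  · rcases lt_trichotomy i n with hin | rfl | hin
    · simpa [hin.le, Nat.succ_le_of_lt hin] using hstep i hin
    · simpa [hn, ← h0'] using hstep' 0 (by omega)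
    · simpa [show ¬ i ≤ n by omega, show ¬ i + 1 ≤ n by omega,
        show i + 1 - n = i - n + 1 by omega] using hstep' (i - n) (by omega)
  · by_cases hin : i ≤ n
    · simpa [hin] using hσ i hin
    · simpa [hin] using hτ (i - n) (by omega)

lemma exists_split (h : JoinedByChain c P n p q) {j : ℕ} (hj : j ≤ n) :
    ∃ r, JoinedByChain c P j p r ∧ JoinedByChain c P (n - j) r q := by
  obtain ⟨σ, h0, hn, hstep, hσ⟩ := h
  refine ⟨σ j, ⟨σ, h0, rfl, fun i hi => hstep i (by omega), fun i hi => hσ i (by omega)⟩,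
    ⟨fun i => σ (j + i), by simp, by simp [Nat.add_sub_cancel' hj, hn],
      fun i hi => hstep (j + i) (by omega), fun i hi => hσ (j + i) (by omega)⟩⟩

end JoinedByChain

lemma IsGeodesicSegment.joinedByChain {f : ℝ → X} {a b : X} (hf : IsGeodesicSegment f a b) :
    JoinedByChain 1 (fun x => dist a x ≤ dist a b) ⌈dist a b⌉₊ a b := by
  have hmem : ∀ k : ℕ, min (k : ℝ) (dist a b) ∈ Icc 0 (dist a b) :=
    fun k => ⟨by positivity, min_le_right _ _⟩
  refine ⟨fun k => f (min k (dist a b)), by simpa [min_eq_left dist_nonneg] using hf.1, ?_,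
    fun i _ => ?_, fun i _ => ?_⟩
  · simpa [min_eq_right (Nat.le_ceil (dist a b))] using hf.2.1
  · rw [hf.dist_eq (hmem i) (hmem (i + 1)), abs_sub_comm,
      abs_of_nonneg (sub_nonneg.2 (min_le_min_right _ (by simp)))]
    push_cast
    rcases le_total (i : ℝ) (dist a b) with h | h
    · rw [min_eq_left h]
      linarith [min_le_left ((i : ℝ) + 1) (dist a b)]
    · rw [min_eq_right h, min_eq_right (by linarith)]
      norm_num
  · simp only
    rw [hf.dist_left (hmem i)]
    exact (hmem i).2

lemma JoinedByChain.of_fin {c : ℝ} {P : X → Prop} {n : ℕ} {p : Fin (n + 1) → X}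
    (hstep : ∀ i : Fin n, dist (p i.castSucc) (p i.succ) ≤ c) (hP : ∀ i, P (p i)) :
    JoinedByChain c P n (p 0) (p (Fin.last n)) := by
  refine ⟨fun i => p ⟨min i n, by omega⟩, ?_, ?_, fun i hi => ?_, fun i _ => hP _⟩
  · simp only [Nat.zero_min]; rfl
  · simp only [min_self]; rfl
  · convert hstep ⟨i, hi⟩ using 3 <;> simp [Fin.ext_iff] <;> omega

namespace IsGromovHyperbolic

variable {δ c : ℝ} {P : X → Prop} (hX : IsGromovHyperbolic δ X)
  (hgeo : ∀ x y : X, ∃ f, IsGeodesicSegment f x y)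
include hX hgeo

lemma exists_dist_le_of_joinedByChain (hc : 0 ≤ c) (h : ℕ) {n : ℕ} {p q : X}
    (hn : n ≤ 2 ^ h) (hpq : JoinedByChain c P n p q) {f : ℝ → X}
    (hf : IsGeodesicSegment f p q) {t : ℝ} (ht : t ∈ Icc 0 (dist p q)) :
    ∃ x, P x ∧ dist (f t) x ≤ 4 * δ * h + c := by
  induction h generalizing n p q f t with
  | zero =>
    refine ⟨p, hpq.left, ?_⟩
    rw [dist_comm, hf.dist_left ht]
    simpa using ht.2.trans (hpq.dist_le_of_le_one hc (by simpa using hn))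
  | succ h ih =>
    obtain ⟨r, hpr, hrq⟩ := hpq.exists_split (min_le_left n (2 ^ h))
    obtain ⟨f₁, hf₁⟩ := hgeo p r
    obtain ⟨f₂, hf₂⟩ := hgeo r q
    obtain ⟨t', ⟨ht', hclose⟩ | ⟨ht', hclose⟩⟩ :=
      hX.exists_dist_le_of_isGeodesicSegment hf hf₁ hf₂ ht
    · obtain ⟨x, hx, hdist⟩ := ih (min_le_right _ _) hpr hf₁ ht'
      refine ⟨x, hx, ?_⟩
      push_cast
      linarith [dist_triangle (f t) (f₁ t') x]
    · obtain ⟨x, hx, hdist⟩ := ih (by rw [pow_succ] at hn; omega) hrq hf₂ ht'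
      refine ⟨x, hx, ?_⟩
      push_cast
      linarith [dist_triangle (f t) (f₂ t') x]

lemma exists_dist_le_logb_of_joinedByChain (hc : 0 ≤ c) {n : ℕ} {p q : X}
    (hpq : JoinedByChain c P n p q) {f : ℝ → X} (hf : IsGeodesicSegment f p q)
    {t : ℝ} (ht : t ∈ Icc 0 (dist p q)) :
    ∃ x, P x ∧ dist (f t) x ≤ 4 * δ * (Real.logb 2 n + 1) + c := by
  have : Nonempty X := ⟨p⟩
  obtain ⟨x, hx, hdist⟩ := hX.exists_dist_le_of_joinedByChain hgeo hc _
    (Nat.le_pow_clog one_lt_two n) hpq hf ht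
  have hlog : (Nat.clog 2 n : ℝ) ≤ Real.logb 2 n + 1 := by
    rw [← Real.natCeil_logb_natCast, Nat.cast_ofNat]
    exact (Nat.ceil_lt_add_one (div_nonneg (Real.log_natCast_nonneg n) (by positivity))).le
  exact ⟨x, hx, hdist.trans (by have := hX.nonneg; gcongr)⟩

end IsGromovHyperbolic

def IsChainQuasiConvex (c : ℝ) (S : Set X) : Prop :=
  ∀ a ∈ S, ∀ b ∈ S, ∃ n : ℕ, (n : ℝ) ≤ c * (dist a b + 1) ∧
    JoinedByChain c (· ∈ S) n a b

lemma IsChainQuasiConvex.mono {c c' : ℝ} {S : Set X} (hS : IsChainQuasiConvex c S)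
    (hc : c ≤ c') : IsChainQuasiConvex c' S := fun a ha b hb => by
  obtain ⟨n, hn, h⟩ := hS a ha b hb
  exact ⟨n, hn.trans (by gcongr), h.mono hc fun _ => id⟩

lemma isChainQuasiConvex_range_smul {G : Type*} [SMul G X] {x₀ : X} {c : ℝ}
    (hqc : ∀ g h : G, ∃ (n : ℕ) (p : Fin (n + 1) → X),
      p 0 = g • x₀ ∧ p (Fin.last n) = h • x₀ ∧ (∀ i, ∃ k : G, p i = k • x₀) ∧
      (∀ i : Fin n, dist (p i.castSucc) (p i.succ) ≤ c) ∧
      (n : ℝ) ≤ c * (dist (g • x₀) (h • x₀) + 1)) :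
    IsChainQuasiConvex c (range fun g : G => g • x₀) := by
  rintro _ ⟨g, rfl⟩ _ ⟨h, rfl⟩
  obtain ⟨n, p, hp0, hpn, hporb, hstep, hn⟩ := hqc g h
  refine ⟨n, hn, ?_⟩
  simp only [← hp0, ← hpn]
  exact JoinedByChain.of_fin hstep fun i => (hporb i).imp fun _ hk => hk.symm

lemma joinedByChain_of_dist_add_le (hgeo : ∀ x y : X, ∃ f, IsGeodesicSegment f x y)
    {c D : ℝ} (hc : 1 ≤ c) {m p q : X} (h : dist p q + D ≤ dist m p + 1) :
    JoinedByChain c (fun x => D - 1 ≤ dist m x) ⌈dist p q⌉₊ p q := by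
  obtain ⟨f, hf⟩ := hgeo p q
  refine hf.joinedByChain.mono hc fun x hx => ?_
  linarith [dist_triangle m x p, dist_comm x p]

/-- The last inequality keeps the straight chain from `f t` to `q` outside the ball of radius
`D - 1` about `m` (see `joinedByChain_of_dist_add_le`). -/
lemma IsGeodesicSegment.exists_near_before {f : ℝ → X} {a b m : X} {S : Set X} {t₀ D : ℝ}
    (hf : IsGeodesicSegment f a b) (ha : a ∈ S) (ht₀ : t₀ ∈ Icc 0 (dist a b)) (hm : f t₀ = m)
    (hD : ∀ s ∈ S, D ≤ dist m s) (hle : ∀ t ∈ Icc 0 (dist a b), infDist (f t) S ≤ D) :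
    ∃ t ∈ Icc 0 t₀, t₀ - t ≤ 2 * D ∧
      ∃ q ∈ S, dist (f t) q ≤ D + 1 ∧ dist (f t) q + D ≤ dist m (f t) + 1 := by
  have hD0 : 0 ≤ D := infDist_nonneg.trans (hle t₀ ht₀)
  rcases le_or_gt t₀ (2 * D) with hsmall | hbig
  · refine ⟨0, ⟨le_rfl, ht₀.1⟩, by linarith, a, ha, ?_, ?_⟩ <;>
      simp only [hf.1, dist_self] <;> linarith [hD a ha]
  · have hmem : t₀ - 2 * D ∈ Icc 0 (dist a b) := ⟨by linarith, by linarith [ht₀.2]⟩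
    obtain ⟨q, hqS, hq⟩ := (infDist_lt_iff ⟨a, ha⟩).1 ((hle _ hmem).trans_lt (lt_add_one D))
    have hm2 : dist m (f (t₀ - 2 * D)) = 2 * D := by
      rw [← hm, hf.dist_eq ht₀ hmem, sub_sub_cancel, abs_of_nonneg (by linarith)]
    exact ⟨t₀ - 2 * D, ⟨hmem.1, by linarith⟩, by linarith, q, hqS, hq.le, by linarith⟩

lemma IsChainQuasiConvex.exists_joinedByChain_around_max {c : ℝ} {S : Set X}
    (hS : IsChainQuasiConvex c S) (hgeo : ∀ x y : X, ∃ f, IsGeodesicSegment f x y)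
    (hc : 1 ≤ c) {f : ℝ → X} {a b : X} (hf : IsGeodesicSegment f a b) (ha : a ∈ S) (hb : b ∈ S)
    {t₀ : ℝ} (ht₀ : t₀ ∈ Icc 0 (dist a b))
    (hmax : IsMaxOn (fun t => infDist (f t) S) (Icc 0 (dist a b)) t₀) :
    ∃ tl ∈ Icc 0 t₀, ∃ tr ∈ Icc t₀ (dist a b), ∃ n : ℕ,
      (n : ℝ) ≤ (2 + 6 * c) * infDist (f t₀) S + (4 + 3 * c) ∧
      JoinedByChain c (fun x => infDist (f t₀) S - 1 ≤ dist (f t₀) x) n (f tl) (f tr) := by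
  set D := infDist (f t₀) S
  have hD : ∀ s ∈ S, D ≤ dist (f t₀) s := fun s hs => infDist_le_dist_of_mem hs
  have hD0 : 0 ≤ D := infDist_nonneg
  obtain ⟨tl, htl, htlD, q₁, hq₁S, hq₁, hq₁'⟩ := hf.exists_near_before ha ht₀ rfl hD hmax
  obtain ⟨tr', htr', htrD, q₃, hq₃S, hq₃, hq₃'⟩ := hf.reverse.exists_near_before hb
    (t₀ := dist a b - t₀) (by rw [dist_comm b a]; constructor <;> linarith [ht₀.1, ht₀.2])
    (by simp only [sub_sub_cancel]) hD fun t ht => hmax (by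
      rw [dist_comm] at ht; constructor <;> linarith [ht.1, ht.2])
  set tr := dist a b - tr'
  obtain ⟨n₂, hn₂, h₂⟩ := hS q₁ hq₁S q₃ hq₃S
  have htr : tr ∈ Icc t₀ (dist a b) := ⟨by linarith [htr'.2], by linarith [htr'.1]⟩
  have hlr : dist (f tl) (f tr) ≤ 4 * D := by
    rw [hf.dist_eq ⟨htl.1, htl.2.trans ht₀.2⟩ ⟨ht₀.1.trans htr.1, htr.2⟩, abs_sub_comm,
      abs_of_nonneg (by linarith [htl.2, htr.1])]
    linarith
  have hq₁₃ : dist q₁ q₃ ≤ 6 * D + 2 := by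
    linarith [dist_triangle4 q₁ (f tl) (f tr) q₃, dist_comm q₁ (f tl)]
  have hceil : ∀ x y : X, (⌈dist x y⌉₊ : ℝ) ≤ dist x y + 1 :=
    fun x y => (Nat.ceil_lt_add_one dist_nonneg).le
  refine ⟨tl, htl, tr, htr, ⌈dist (f tl) q₁⌉₊ + n₂ + ⌈dist (f tr) q₃⌉₊, ?_, ?_⟩
  · have : (n₂ : ℝ) ≤ c * (6 * D + 3) :=
      hn₂.trans (mul_le_mul_of_nonneg_left (by linarith) (by linarith))
    push_cast
    linarith [hceil (f tl) q₁, hceil (f tr) q₃]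
  · exact ((joinedByChain_of_dist_add_le hgeo hc hq₁').trans
      (h₂.mono le_rfl fun x hx => by linarith [hD x hx])).trans
      (joinedByChain_of_dist_add_le hgeo hc hq₃').symm

lemma eventually_mul_logb_add_lt (a b A B : ℝ) (hA : 0 < A) :
    ∀ᶠ D in atTop, a * Real.logb 2 (A * D + B) + b < D := by
  have hlin : Tendsto (fun D => A * D + B) atTop atTop :=
    tendsto_atTop_add_const_right _ B (tendsto_id.const_mul_atTop hA)
  have hlog : (fun D => Real.log (A * D + B)) =o[atTop] id :=
    (Real.isLittleO_log_id_atTop.comp_tendsto hlin).trans_isBigO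
      ((Asymptotics.isBigO_const_mul_self A id atTop).add
        (Asymptotics.isLittleO_const_id_atTop B).isBigO)
  have hsmall : (fun D => a * Real.logb 2 (A * D + B) + b) =o[atTop] id :=
    ((hlog.const_mul_left (a / Real.log 2)).congr_left fun D => by
      rw [Real.logb, mul_div_assoc', div_mul_eq_mul_div]).add
      (Asymptotics.isLittleO_const_id_atTop b)
  filter_upwards [hsmall.def one_half_pos, eventually_gt_atTop 0] with D hD hD0
  rw [Real.norm_eq_abs, Real.norm_eq_abs, id, abs_of_pos hD0] at hD
  linarith [le_abs_self (a * Real.logb 2 (A * D + B) + b)]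

namespace IsGromovHyperbolic

variable {δ c : ℝ} {S : Set X} (hX : IsGromovHyperbolic δ X)
  (hgeo : ∀ x y : X, ∃ f, IsGeodesicSegment f x y)
include hX hgeo

lemma infDist_sub_one_le (hc : 1 ≤ c) (hS : IsChainQuasiConvex c S) {f : ℝ → X} {a b : X}
    (hf : IsGeodesicSegment f a b) (ha : a ∈ S) (hb : b ∈ S) {t₀ : ℝ}
    (ht₀ : t₀ ∈ Icc 0 (dist a b))
    (hmax : IsMaxOn (fun t => infDist (f t) S) (Icc 0 (dist a b)) t₀) :
    infDist (f t₀) S - 1 ≤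
      4 * δ * (Real.logb 2 ((2 + 6 * c) * infDist (f t₀) S + (4 + 3 * c)) + 1) + c := by
  have : Nonempty X := ⟨a⟩
  obtain ⟨tl, htl, tr, htr, n, hn, hchain⟩ :=
    hS.exists_joinedByChain_around_max hgeo hc hf ha hb ht₀ hmax
  have hsub := hf.restrict ⟨htl.1, htl.2.trans ht₀.2⟩ ⟨htl.2.trans htr.1, htr.2⟩
  have hparam : t₀ - tl ∈ Icc 0 (dist (f tl) (f tr)) := by
    rw [hf.dist_eq ⟨htl.1, htl.2.trans ht₀.2⟩ ⟨ht₀.1.trans htr.1, htr.2⟩, abs_sub_comm,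
      abs_of_nonneg (by linarith [htl.2, htr.1])]
    constructor <;> linarith [htl.2, htr.1]
  obtain ⟨x, hx, hdist⟩ :=
    hX.exists_dist_le_logb_of_joinedByChain hgeo (by linarith) hchain hsub hparam
  rw [add_sub_cancel] at hdist
  have hlog : Real.logb 2 n ≤ Real.logb 2 ((2 + 6 * c) * infDist (f t₀) S + (4 + 3 * c)) := by
    have : 0 ≤ infDist (f t₀) S := infDist_nonneg
    rcases n.eq_zero_or_pos with rfl | hpos
    · simpa using Real.logb_nonneg one_lt_two (by nlinarith)
    · exact Real.logb_le_logb_of_le one_lt_two (by positivity) hn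
  have := hX.nonneg
  calc infDist (f t₀) S - 1 ≤ dist (f t₀) x := hx
    _ ≤ _ := hdist
    _ ≤ _ := by gcongr

lemma exists_infDist_le_of_isChainQuasiConvex (hc : 1 ≤ c) (hS : IsChainQuasiConvex c S) :
    ∃ M, ∀ a ∈ S, ∀ b ∈ S, ∀ f, IsGeodesicSegment f a b →
      ∀ t ∈ Icc 0 (dist a b), infDist (f t) S ≤ M := by
  obtain ⟨M, hM⟩ := (eventually_mul_logb_add_lt (4 * δ) (4 * δ + c + 1) (2 + 6 * c) (4 + 3 * c)
    (by linarith)).exists_forall_of_atTop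
  refine ⟨M, fun a ha b hb f hf t ht => ?_⟩
  obtain ⟨t₀, ht₀, hmax⟩ := isCompact_Icc.exists_isMaxOn (nonempty_Icc.2 dist_nonneg)
    ((continuous_infDist_pt S).comp_continuousOn hf.continuousOn)
  refine (hmax ht).trans (le_of_not_ge fun hMD => ?_)
  have := hX.infDist_sub_one_le hgeo hc hS hf ha hb ht₀ hmax
  linarith [hM (infDist (f t₀) S) hMD]

end IsGromovHyperbolic

def IsGeodesicRay (u : ℕ → X) : Prop :=
  ∀ j k : ℕ, dist (u j) (u k) = |(j : ℝ) - k|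

namespace IsGeodesicRay

variable {u : ℕ → X}

lemma gp_eq (hu : IsGeodesicRay u) (j k : ℕ) : gp (u 0) (u j) (u k) = min (j : ℝ) k := by
  rw [gp, hu 0 j, hu 0 k, hu j k, Nat.cast_zero, zero_sub, zero_sub, abs_neg, abs_neg,
    Nat.abs_cast, Nat.abs_cast]
  rcases le_total (j : ℝ) k with h | h
  · rw [abs_of_nonpos (by linarith), min_eq_left h]; ring
  · rw [abs_of_nonneg (by linarith), min_eq_right h]; ring

lemma tendsto_gp (hu : IsGeodesicRay u) :
    Tendsto (fun p : ℕ × ℕ => gp (u 0) (u p.1) (u p.2)) atTop atTop := by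
  simp only [hu.gp_eq, ← prod_atTop_atTop_eq]
  exact tendsto_inf_atTop _ (tendsto_natCast_atTop_atTop.comp tendsto_fst)
    (tendsto_natCast_atTop_atTop.comp tendsto_snd)

end IsGeodesicRay

lemma IsGromovHyperbolic.dist_le_of_isGeodesicRay {δ : ℝ} (hX : IsGromovHyperbolic δ X)
    {u : ℕ → X} (hu : IsGeodesicRay u) {z : X} {f : ℝ → X} (hf : IsGeodesicSegment f (u 0) z)
    {s k : ℕ} (hsk : s ≤ k) (hs : (s : ℝ) ≤ gp (u 0) (u k) z) : dist (f s) (u s) ≤ 4 * δ := by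
  have hmem : (s : ℝ) ∈ Icc 0 (dist (u 0) z) :=
    ⟨s.cast_nonneg, hs.trans (gp_le_dist_right _ _ _)⟩
  refine hX.dist_le_of_le_gp (a := z) (b := u k) (hf.dist_left hmem) (by rw [hu]; simp)
    (hf.gp_eq hmem).ge (by rwa [gp_comm]) ?_
  rw [hu.gp_eq, min_eq_right (by exact_mod_cast hsk)]

lemma exists_isGeodesicRay [ProperSpace X] (hgeo : ∀ x y : X, ∃ f, IsGeodesicSegment f x y)
    (x₀ : X) {y : ℕ → X} (hy : ∀ n : ℕ, (n : ℝ) ≤ dist x₀ (y n)) :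
    ∃ u : ℕ → X, u 0 = x₀ ∧ IsGeodesicRay u ∧ ∀ (z : X) (r : ℝ),
      (∀ n, dist x₀ (y n) + r ≤ dist (y n) z) → ∀ k : ℕ, k + r ≤ dist (u k) z := by
  choose F hF using fun n => hgeo x₀ (y n)
  have hmem : ∀ n k : ℕ, min (k : ℝ) (dist x₀ (y n)) ∈ Icc 0 (dist x₀ (y n)) :=
    fun n k => ⟨le_min k.cast_nonneg dist_nonneg, min_le_right _ _⟩
  have hmem_le : ∀ {n k : ℕ}, k ≤ n → (k : ℝ) ∈ Icc 0 (dist x₀ (y n)) :=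
    fun hk => ⟨Nat.cast_nonneg _, (Nat.cast_le.2 hk).trans (hy _)⟩
  set v : ℕ → ℕ → X := fun n k => F n (min k (dist x₀ (y n)))
  have hv : ∀ {n k : ℕ}, k ≤ n → v n k = F n k := fun hk => by
    simp only [v, min_eq_left (hmem_le hk).2]
  obtain ⟨u, -, φ, hφ, hlim⟩ :=
    (isCompact_univ_pi fun k : ℕ => isCompact_closedBall x₀ (k : ℝ)).tendsto_subseq
    (x := v) fun n => mem_univ_pi.2 fun k => by
      rw [mem_closedBall, dist_comm, (hF n).dist_left (hmem n k)]
      exact min_le_left _ _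
  have hlim' : ∀ k, Tendsto (fun i => v (φ i) k) atTop (𝓝 (u k)) :=
    fun k => tendsto_pi_nhds.1 hlim k
  have hlarge : ∀ k, ∀ᶠ i in atTop, k ≤ φ i :=
    fun k => (eventually_ge_atTop k).mono fun i hi => hi.trans hφ.le_apply
  refine ⟨u, ?_, fun j k => ?_, fun z r hr k => ?_⟩
  · refine tendsto_nhds_unique (hlim' 0) (tendsto_const_nhds.congr fun i => ?_)
    rw [hv (Nat.zero_le _), Nat.cast_zero, (hF _).1]
  · refine tendsto_nhds_unique ((hlim' j).dist (hlim' k)) (tendsto_const_nhds.congr' ?_)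
    filter_upwards [hlarge (max j k)] with i hi
    rw [hv (le_of_max_le_left hi), hv (le_of_max_le_right hi),
      (hF _).dist_eq (hmem_le (le_of_max_le_left hi)) (hmem_le (le_of_max_le_right hi))]
  · refine ge_of_tendsto ((hlim' k).dist tendsto_const_nhds) ?_
    filter_upwards [hlarge k] with i hi
    rw [hv hi]
    linarith [hr (φ i), (hF (φ i)).dist_right (hmem_le hi),
      dist_triangle (y (φ i)) (F (φ i) k) z, dist_comm (y (φ i)) (F (φ i) k)]

lemma exists_far_from_orbit {G : Type*} [Group G] [MulAction G X]
    (hiso : ∀ g : G, Isometry fun x : X => g • x) (x₀ : X) {R : ℝ}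
    (h : ∃ x, ∀ g : G, R < dist x (g • x₀)) :
    ∃ y, R ≤ dist x₀ y ∧ ∀ g : G, dist x₀ y - 1 ≤ dist y (g • x₀) := by
  obtain ⟨x, hx⟩ := h
  have hne : (range fun g : G => g • x₀).Nonempty := range_nonempty _
  have hR : R ≤ infDist x (range fun g : G => g • x₀) :=
    (le_infDist hne).2 (forall_mem_range.2 fun g => (hx g).le)
  obtain ⟨_, ⟨g₀, rfl⟩, hg₀⟩ := (infDist_lt_iff hne).1 (lt_add_one (infDist x _))
  have hy : ∀ g : G, dist (g₀⁻¹ • x) (g • x₀) = dist x ((g₀ * g) • x₀) := fun g => by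
    rw [← (hiso g₀).dist_eq, smul_inv_smul, smul_smul]
  have hx₀ : dist x₀ (g₀⁻¹ • x) = dist x (g₀ • x₀) := by
    rw [← (hiso g₀).dist_eq, smul_inv_smul, dist_comm]
  refine ⟨g₀⁻¹ • x, ?_, fun g => ?_⟩
  · rw [hx₀]
    exact hR.trans (infDist_le_dist_of_mem ⟨g₀, rfl⟩)
  · rw [hx₀, hy]
    linarith [infDist_le_dist_of_mem (x := x)
      (mem_range_self (f := fun g : G => g • x₀) (g₀ * g))]

end

theorem stmt_12_general {X G : Type*} [MetricSpace X] [ProperSpace X]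
    [Group G] [MulAction G X]
    (hiso : ∀ g : G, Isometry fun x : X => g • x)
    (hgeo : ∀ x y : X, ∃ f : ℝ → X, f 0 = x ∧ f (dist x y) = y ∧
      ∀ s t : ℝ, s ∈ Set.Icc 0 (dist x y) → t ∈ Set.Icc 0 (dist x y) →
        dist (f s) (f t) = |s - t|)
    (δ : ℝ)
    (hδ : ∀ x y z w : X, min (gp x y w) (gp x w z) - δ ≤ gp x y z)
    (x₀ : X)
    -- the orbit `G•x₀` is quasi-convex
    (hqc : ∃ c : ℝ, 0 ≤ c ∧ ∀ g h : G, ∃ (n : ℕ) (p : Fin (n + 1) → X),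
      p 0 = g • x₀ ∧ p (Fin.last n) = h • x₀ ∧ (∀ i, ∃ k : G, p i = k • x₀) ∧
      (∀ i : Fin n, dist (p i.castSucc) (p i.succ) ≤ c) ∧
      (n : ℝ) ≤ c * (dist (g • x₀) (h • x₀) + 1))
    -- the limit set is all of `∂X`: every Cauchy–Gromov sequence is equivalent to an orbit
    -- sequence
    (hfull : ∀ u : ℕ → X,
      Tendsto (fun p : ℕ × ℕ => gp x₀ (u p.1) (u p.2)) atTop atTop →
      ∃ gs : ℕ → G, Tendsto (fun n => gp x₀ (u n) (gs n • x₀)) atTop atTop) :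
    ∃ R : ℝ, ∀ x : X, ∃ g : G, dist x (g • x₀) ≤ R := by
  have hX : IsGromovHyperbolic δ X := hδ
  obtain ⟨c, -, hc⟩ := hqc
  obtain ⟨M, hM⟩ := hX.exists_infDist_le_of_isChainQuasiConvex hgeo (le_max_right c 1)
    ((isChainQuasiConvex_range_smul hc).mono (le_max_left c 1))
  by_contra! hfar
  choose y hy hyfar using fun n : ℕ => exists_far_from_orbit hiso x₀ (hfar n)
  obtain ⟨u, rfl, hu, hufar⟩ := exists_isGeodesicRay hgeo x₀ hy
  obtain ⟨gs, hgs⟩ := hfull u hu.tendsto_gp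
  obtain ⟨s, hs⟩ := exists_nat_gt (M + 1 + 4 * δ)
  obtain ⟨k, hks, hk⟩ := ((eventually_ge_atTop s).and (hgs.eventually_ge_atTop s)).exists
  obtain ⟨f, hf⟩ := hgeo (u 0) (gs k • u 0)
  have hmem : (s : ℝ) ∈ Icc 0 (dist (u 0) (gs k • u 0)) :=
    ⟨s.cast_nonneg, hk.trans (gp_le_dist_right _ _ _)⟩
  have hnear := hM _ ⟨1, one_smul G _⟩ _ ⟨gs k, rfl⟩ f hf s hmem
  have hfar_s : (s : ℝ) - 1 - 4 * δ ≤ infDist (f s) (range fun g : G => g • u 0) :=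
    (le_infDist (range_nonempty _)).2 <| forall_mem_range.2 fun g => by
      linarith [hufar _ (-1) (fun n => by linarith [hyfar n g]) s, dist_comm (f s) (u s),
        hX.dist_le_of_isGeodesicRay hu hf hks hk, dist_triangle (u s) (f s) (g • u 0)]
  linarith

/-- If `G` acts isometrically on a proper geodesic hyperbolic space `X` with quasi-convex
orbits and full limit set `∂_X G = ∂X`, then `G` acts cocompactly on `X`. -/
theorem stmt_12 {X G : Type*} [MetricSpace X] [ProperSpace X] [Nonempty X]
    [Group G] [MulAction G X]
    (hiso : ∀ g : G, Isometry fun x : X => g • x)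
    (hgeo : ∀ x y : X, ∃ f : ℝ → X, f 0 = x ∧ f (dist x y) = y ∧
      ∀ s t : ℝ, s ∈ Set.Icc 0 (dist x y) → t ∈ Set.Icc 0 (dist x y) →
        dist (f s) (f t) = |s - t|)
    (δ : ℝ)
    (hδ : ∀ x y z w : X, min (gp x y w) (gp x w z) - δ ≤ gp x y z)
    (x₀ : X)
    -- the orbit `G•x₀` is quasi-convex
    (hqc : ∃ c : ℝ, 0 ≤ c ∧ ∀ g h : G, ∃ (n : ℕ) (p : Fin (n + 1) → X),
      p 0 = g • x₀ ∧ p (Fin.last n) = h • x₀ ∧ (∀ i, ∃ k : G, p i = k • x₀) ∧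
      (∀ i : Fin n, dist (p i.castSucc) (p i.succ) ≤ c) ∧
      (n : ℝ) ≤ c * (dist (g • x₀) (h • x₀) + 1))
    -- the limit set is all of `∂X`: every Cauchy–Gromov sequence is equivalent to an orbit
    -- sequence
    (hfull : ∀ u : ℕ → X,
      Tendsto (fun p : ℕ × ℕ => gp x₀ (u p.1) (u p.2)) atTop atTop →
      ∃ gs : ℕ → G, Tendsto (fun n => gp x₀ (u n) (gs n • x₀)) atTop atTop) :
    ∃ R : ℝ, ∀ x : X, ∃ g : G, dist x (g • x₀) ≤ R :=
  stmt_12_general hiso hgeo δ hδ x₀ hqc hfull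
end

section
/- Let H be a connected-by-compact locally compact group, Λ ∈ {ℤ, ℝ}, and G = H ⋊ Λ a semidirect product, with (αₜ) the Λ-action on H. If α_t is a compaction for some t > 0, then α_t is a compaction for every t > 0. Moreover, conjugating a compaction of H by an inner automorphism of H yields again a compaction, provided H has no nontrivial compact normal subgroup and splits as M ⋊ K with K compact as in the structure theory. -/
open scoped Pointwise

/-!
For a flow, `α_t^n = α_r ∘ α_s^q` where `n • t = r + q • s` with `0 ≤ r < s`, so a vacuum
set `V` of `α_s` yields the compact vacuum set `α ([0, s] × V)` of `α_t`.

For the inner automorphism, `(Ad y ∘ β)^n = Ad (c_n) ∘ β^n` with the cocycle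
`c_n = y β(y) ⋯ β^{n-1}(y)`, so it suffices that `(c_n)` stays in a compact set. The points
having a compact set of preimages under every `β^n` form a compact `β`-invariant subgroup
`Q` that uniformly attracts compact sets. Take neighbourhoods `E₀, E₁, E₂` of `1` with `E₀`
compact, `E₁ E₁ ⊆ E₀` and all `Q`-conjugates of `E₂` inside `E₁`, so that
`(Q E₂)(Q E₁) ⊆ Q E₀`. Let `β^M` map `Q E₀` into `Q E₁`, and push `y` so close to `Q` that
`c_m(β^T y) ∈ Q E₂` for `m ≤ M`; then strong induction gives `c_n(β^T y) ∈ Q E₀` for all `n`.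
-/

open Set Filter Function Topology

section Flow

theorem iterate_eq_nsmul_of_map_add {M X : Type*} [AddMonoid M] {α : M → X → X}
    (h0 : α 0 = id) (hadd : ∀ s t, α (s + t) = α s ∘ α t) (t : M) (n : ℕ) :
    (α t)^[n] = α (n • t) := by
  induction n with
  | zero => rw [zero_smul, h0, iterate_zero]
  | succ n ih => rw [iterate_succ', ih, succ_nsmul', hadd]

variable {Λ : Type*} [AddCommGroup Λ] [LinearOrder Λ] [IsOrderedAddMonoid Λ] [Archimedean Λ]
  [TopologicalSpace Λ] [CompactIccSpace Λ]

theorem CompactingFun.of_map_add {X : Type*} [TopologicalSpace X] {α : Λ → X → X} (h0 : α 0 = id)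
    (hadd : ∀ s t, α (s + t) = α s ∘ α t) (hα : Continuous fun p : Λ × X => α p.1 p.2)
    {s t : Λ} (hs : 0 < s) (ht : 0 < t) (h : CompactingFun (α s)) : CompactingFun (α t) := by
  obtain ⟨V, hV, hVabs⟩ := h
  refine ⟨(fun p : Λ × X => α p.1 p.2) '' (Icc 0 s ×ˢ V), (isCompact_Icc.prod hV).image hα,
    fun x => ?_⟩
  obtain ⟨N, hN⟩ := hVabs x
  obtain ⟨k, hk⟩ := Archimedean.arch ((N + 2) • s) ht
  refine ⟨k, fun n hn => ?_⟩
  set q := toIcoDiv hs 0 (n • t)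
  set r := toIcoMod hs 0 (n • t)
  have hr : r ∈ Ico 0 s := by simpa using toIcoMod_mem_Ico hs 0 (n • t)
  have hnt : n • t = r + q • s := sub_eq_iff_eq_add.1 (self_sub_toIcoDiv_zsmul hs 0 (n • t))
  have hq : ((N + 1 : ℕ) : ℤ) < q := by
    rw [← zsmul_lt_zsmul_iff_left hs, natCast_zsmul]
    refine lt_of_add_lt_add_right (a := s) ?_
    calc (N + 1) • s + s = (N + 2) • s := (succ_nsmul s (N + 1)).symm
      _ ≤ n • t := hk.trans (nsmul_le_nsmul_left ht.le hn.le)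
      _ = r + q • s := hnt
      _ < q • s + s := (add_lt_add_left hr.2 _).trans_eq (add_comm _ _)
  have hqs : q • s = q.toNat • s := by rw [← natCast_zsmul, Int.toNat_of_nonneg (by omega)]
  refine ⟨(r, (α s)^[q.toNat] x), ⟨⟨hr.1, hr.2.le⟩, hN _ (by omega)⟩, ?_⟩
  rw [iterate_eq_nsmul_of_map_add h0 hadd, iterate_eq_nsmul_of_map_add h0 hadd, hnt, hqs, hadd]
  rfl

theorem CompactingFun.of_mulAut_map_add {H : Type*} [Group H] [TopologicalSpace H]
    {α : Λ → MulAut H} (hadd : ∀ s t, α (s + t) = α s * α t)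
    (hα : Continuous fun p : Λ × H => α p.1 p.2) {s t : Λ} (hs : 0 < s) (ht : 0 < t)
    (h : CompactingFun (α s)) : CompactingFun (α t) := by
  have h0 : α 0 = 1 := by simpa using hadd 0 0
  exact CompactingFun.of_map_add (α := fun t => ⇑(α t)) (by rw [h0]; rfl)
    (fun s t => by rw [hadd, MulAut.coe_mul]) hα hs ht h

end Flow

section CompactCore

variable {X : Type*} {f : X → X}

theorem antitone_image_iterate {A : Set X} (hfA : MapsTo f A A) :
    Antitone fun n => f^[n] '' A :=
  antitone_nat_of_succ_le fun n => by
    rw [iterate_succ, image_comp]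
    exact image_mono hfA.image_subset

variable [TopologicalSpace X]

theorem IsCompact.exists_bounded_hitting_time {C : Set X} (hC : IsCompact C) (hf : Continuous f)
    {U : Set X} (hU : IsOpen U) (hfU : ∀ x, ∃ n, f^[n] x ∈ U) :
    ∃ R, ∀ x ∈ C, ∃ n ≤ R, f^[n] x ∈ U := by
  obtain ⟨t, ht⟩ := hC.elim_finite_subcover (fun n => f^[n] ⁻¹' U)
    (fun n => hU.preimage (hf.iterate n)) (fun x _ => mem_iUnion.2 (hfU x))
  refine ⟨t.sup id, fun x hx => ?_⟩
  obtain ⟨n, hn, hxn⟩ := mem_iUnion₂.1 (ht hx)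
  exact ⟨n, Finset.le_sup (f := id) hn, hxn⟩

def AbsorbsCompacts (f : X → X) (A : Set X) : Prop :=
  ∀ C, IsCompact C → ∀ᶠ m in atTop, MapsTo f^[m] C A

theorem CompactingFun.exists_absorbsCompacts [WeaklyLocallyCompactSpace X] (hf : Continuous f)
    (h : CompactingFun f) : ∃ A, IsCompact A ∧ MapsTo f A A ∧ AbsorbsCompacts f A := by
  obtain ⟨V, hV, hVabs⟩ := h
  obtain ⟨W, hW, hVW⟩ := exists_compact_superset hV
  have hit : ∀ x, ∃ n, f^[n] x ∈ interior W := fun x =>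
    let ⟨N, hN⟩ := hVabs x
    ⟨N + 1, hVW (hN _ N.lt_succ_self)⟩
  obtain ⟨R, hR⟩ := (hW.image hf).exists_bounded_hitting_time hf isOpen_interior hit
  set A := ⋃ j ∈ Iic R, f^[j] '' W
  have hA : IsCompact A := (finite_Iic R).isCompact_biUnion fun j _ => hW.image (hf.iterate j)
  have hWA : W ⊆ A := fun w hw => mem_biUnion (mem_Iic.2 (Nat.zero_le R)) ⟨w, hw, rfl⟩
  have hfA : MapsTo f A A := by
    intro x hx
    obtain ⟨j, hj, v, hv, rfl⟩ := mem_iUnion₂.1 hx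
    rcases (mem_Iic.1 hj).lt_or_eq with hj | rfl
    · exact mem_biUnion (mem_Iic.2 hj) ⟨v, hv, iterate_succ_apply' f j v⟩
    · obtain ⟨n, hn, hfn⟩ := hR (f v) (mem_image_of_mem f hv)
      refine mem_biUnion (mem_Iic.2 (Nat.sub_le j n)) ⟨_, interior_subset hfn, ?_⟩
      rw [← iterate_succ_apply, ← iterate_add_apply, ← iterate_succ_apply' f j,
        show j - n + (n + 1) = j + 1 by omega]
  refine ⟨A, hA, hfA, fun C hC => ?_⟩
  obtain ⟨R', hR'⟩ := hC.exists_bounded_hitting_time hf isOpen_interior hit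
  filter_upwards [eventually_ge_atTop R'] with m hm x hx
  obtain ⟨n, hn, hxn⟩ := hR' x hx
  rw [← Nat.sub_add_cancel (hn.trans hm), iterate_add_apply]
  exact hfA.iterate _ (hWA (interior_subset hxn))

def compactCore (f : X → X) : Set X :=
  {z | ∃ C, IsCompact C ∧ ∀ n, z ∈ f^[n] '' C}

theorem mem_compactCore_of_apply_eq {x : X} (hx : f x = x) : x ∈ compactCore f :=
  ⟨{x}, isCompact_singleton, fun n => ⟨x, rfl, iterate_fixed hx n⟩⟩

theorem mapsTo_compactCore (hf : Continuous f) : MapsTo f (compactCore f) (compactCore f) := by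
  rintro z ⟨C, hC, hz⟩
  refine ⟨f '' C, hC.image hf, fun n => ?_⟩
  obtain ⟨c, hc, rfl⟩ := hz n
  exact ⟨f c, mem_image_of_mem f hc,
    (iterate_succ_apply f n c).symm.trans (iterate_succ_apply' f n c)⟩

theorem compactCore_eq_iInter_image {A : Set X} (hA : IsCompact A)
    (habs : AbsorbsCompacts f A) : compactCore f = ⋂ n, f^[n] '' A := by
  refine Subset.antisymm (fun z ⟨C, hC, hz⟩ => mem_iInter.2 fun n => ?_)
    fun z hz => ⟨A, hA, mem_iInter.1 hz⟩
  obtain ⟨R, hR⟩ := (habs C hC).exists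
  obtain ⟨c, hc, rfl⟩ := hz (n + R)
  exact ⟨f^[R] c, hR hc, (iterate_add_apply f n R c).symm⟩

theorem AbsorbsCompacts.eventually_mapsTo [T2Space X] (hf : Continuous f) {A : Set X}
    (hA : IsCompact A) (hfA : MapsTo f A A) (habs : AbsorbsCompacts f A) {O : Set X}
    (hO : IsOpen O) (hcore : compactCore f ⊆ O) {C : Set X} (hC : IsCompact C) :
    ∀ᶠ m in atTop, MapsTo f^[m] C O := by
  obtain ⟨i, hi⟩ := hA.elim_directed_family_closed (fun n => f^[n] '' A ∩ Oᶜ)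
    (fun n => (hA.image (hf.iterate n)).isClosed.inter hO.isClosed_compl)
    (by rw [← iInter_inter, ← compactCore_eq_iInter_image hA habs,
      ← sdiff_eq, sdiff_eq_empty.2 hcore, inter_empty])
    (Antitone.directed_ge fun _ _ h => inter_subset_inter_left _ (antitone_image_iterate hfA h))
  have hiO : MapsTo f^[i] A O := fun a ha => by
    by_contra hO'
    exact (eq_empty_iff_forall_notMem.1 hi) _ ⟨hfA.iterate i ha, mem_image_of_mem _ ha, hO'⟩
  filter_upwards [(tendsto_sub_atTop_nat i).eventually (habs C hC), eventually_ge_atTop i]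
    with m hm him c hc
  rw [← Nat.add_sub_cancel' him, iterate_add_apply]
  exact hiO (hm hc)

variable [WeaklyLocallyCompactSpace X] [T2Space X]

theorem CompactingFun.isCompact_compactCore (hf : Continuous f) (h : CompactingFun f) :
    IsCompact (compactCore f) := by
  obtain ⟨A, hA, -, habs⟩ := h.exists_absorbsCompacts hf
  rw [compactCore_eq_iInter_image hA habs]
  exact hA.of_isClosed_subset (isClosed_iInter fun n => (hA.image (hf.iterate n)).isClosed)
    (iInter_subset_of_subset 0 (image_id A).subset)

theorem CompactingFun.eventually_mapsTo (hf : Continuous f) (h : CompactingFun f) {O : Set X}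
    (hO : IsOpen O) (hcore : compactCore f ⊆ O) {C : Set X} (hC : IsCompact C) :
    ∀ᶠ m in atTop, MapsTo f^[m] C O :=
  let ⟨_, hA, hfA, habs⟩ := h.exists_absorbsCompacts hf
  habs.eventually_mapsTo hf hA hfA hO hcore hC

end CompactCore

section Cocycle

variable {H : Type*} [Group H]

/-- `cocycle β u n = u * β u * β² u * ⋯ * βⁿ⁻¹ u`. -/
def cocycle (β : MulAut H) (u : H) : ℕ → H
  | 0 => 1
  | n + 1 => u * β (cocycle β u n)

variable (β : MulAut H)

theorem map_cocycle (u : H) (n : ℕ) : β (cocycle β u n) = cocycle β (β u) n := by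
  induction n with
  | zero => exact map_one β
  | succ n ih => rw [cocycle, cocycle, map_mul, ih]

theorem cocycle_add (u : H) (m n : ℕ) :
    cocycle β u (m + n) = cocycle β u m * cocycle β ((⇑β)^[m] u) n := by
  induction m generalizing u with
  | zero => rw [zero_add, cocycle, one_mul, iterate_zero_apply]
  | succ m ih =>
    rw [Nat.add_right_comm, cocycle, cocycle, map_cocycle, ih, map_cocycle, iterate_succ_apply,
      mul_assoc]

theorem iterate_map_cocycle (u : H) (k n : ℕ) :
    (⇑β)^[k] (cocycle β u n) = cocycle β ((⇑β)^[k] u) n :=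
  (Semiconj.iterate_right (f := (cocycle β · n)) (fun u => (map_cocycle β u n).symm) k u).symm

theorem iterate_conj_apply (u h : H) (n : ℕ) :
    (fun h => u * β h * u⁻¹)^[n] h = cocycle β u n * (⇑β)^[n] h * (cocycle β u n)⁻¹ := by
  induction n with
  | zero => simp [cocycle]
  | succ n ih =>
    rw [iterate_succ_apply', ih, iterate_succ_apply', cocycle]
    simp only [map_mul, map_inv]
    group

theorem cocycle_mem {Q : Subgroup H} (hQ : ∀ q ∈ Q, β q ∈ Q) {u : H} (hu : u ∈ Q) (n : ℕ) :
    cocycle β u n ∈ Q := by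
  induction n with
  | zero => exact Q.one_mem
  | succ n ih => exact Q.mul_mem hu (hQ _ ih)

theorem cocycle_mem_of_mul_subset {S T P : Set H} {M : ℕ} (hM : 0 < M)
    (hβM : MapsTo (⇑β)^[M] P T) (hST : S * T ⊆ P) (hSP : S ⊆ P) {w : H}
    (hw : ∀ m ≤ M, cocycle β w m ∈ S) (n : ℕ) : cocycle β w n ∈ P := by
  induction n using Nat.strong_induction_on with
  | _ n ih =>
    rcases le_or_gt n M with hn | hn
    · exact hSP (hw n hn)
    · rw [← Nat.add_sub_cancel' hn.le, cocycle_add, ← iterate_map_cocycle]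
      exact hST (mul_mem_mul (hw M le_rfl) (hβM (ih _ (by omega))))

end Cocycle

section TopologicalGroup

variable {H : Type*} [Group H] [TopologicalSpace H] [IsTopologicalGroup H]

def compactCoreSubgroup (β : MulAut H) : Subgroup H where
  carrier := compactCore β
  one_mem' := mem_compactCore_of_apply_eq (map_one β)
  mul_mem' := by
    rintro a b ⟨C, hC, ha⟩ ⟨D, hD, hb⟩
    refine ⟨C * D, hC.mul hD, fun n => ?_⟩
    obtain ⟨c, hc, rfl⟩ := ha n
    obtain ⟨d, hd, rfl⟩ := hb n
    exact ⟨c * d, mul_mem_mul hc hd, iterate_map_mul β n c d⟩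
  inv_mem' := by
    rintro a ⟨C, hC, ha⟩
    refine ⟨C⁻¹, hC.inv, fun n => ?_⟩
    obtain ⟨c, hc, rfl⟩ := ha n
    exact ⟨c⁻¹, inv_mem_inv.2 hc, iterate_map_inv β n c⟩

theorem continuous_cocycle {β : MulAut H} (hβ : Continuous β) (n : ℕ) :
    Continuous fun u => cocycle β u n := by
  induction n with
  | zero => exact continuous_const
  | succ n ih => exact continuous_id.mul (hβ.comp ih)

theorem IsCompact.exists_isOpen_one_mem_conj_subset {K U : Set H} (hK : IsCompact K)
    (hU : IsOpen U) (h1 : (1 : H) ∈ U) :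
    ∃ V : Set H, IsOpen V ∧ (1 : H) ∈ V ∧ ∀ v ∈ V, ∀ k ∈ K, k⁻¹ * v * k ∈ U := by
  have : ∀ᶠ v in 𝓝 (1 : H), ∀ k ∈ K, k⁻¹ * v * k ∈ U :=
    hK.eventually_forall_of_forall_eventually fun k _ =>
      ((continuous_snd.inv.mul continuous_fst).mul continuous_snd).continuousAt.eventually_mem
        (by simpa using hU.mem_nhds h1)
  obtain ⟨V, hVU, hV, h1V⟩ := eventually_nhds_iff.1 this
  exact ⟨V, hV, h1V, hVU⟩

theorem exists_isCompact_cocycle_mem_of_iterate {β : MulAut H} {y : H} (T : ℕ) {B : Set H}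
    (hB : IsCompact B) (hT : ∀ n, cocycle β ((⇑β)^[T] y) n ∈ B) :
    ∃ B', IsCompact B' ∧ ∀ n, cocycle β y n ∈ B' := by
  refine ⟨cocycle β y '' Iio T ∪ {cocycle β y T} * B,
    ((finite_Iio T).image _).isCompact.union (isCompact_singleton.mul hB), fun n => ?_⟩
  rcases lt_or_ge n T with hn | hn
  · exact Or.inl (mem_image_of_mem _ hn)
  · rw [← Nat.add_sub_cancel' hn, cocycle_add]
    exact Or.inr (mul_mem_mul rfl (hT _))

variable [WeaklyLocallyCompactSpace H] [T2Space H]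

theorem CompactingFun.exists_isCompact_cocycle_mem {β : MulAut H} (hβ : Continuous β)
    (h : CompactingFun β) (y : H) : ∃ B, IsCompact B ∧ ∀ n, cocycle β y n ∈ B := by
  set Q := compactCoreSubgroup β
  have hQ : IsCompact (Q : Set H) := h.isCompact_compactCore hβ
  have hβQ : ∀ q ∈ Q, β q ∈ Q := fun q hq => mapsTo_compactCore hβ hq
  obtain ⟨E₀, hE₀, hE₀1⟩ := exists_compact_mem_nhds (1 : H)
  obtain ⟨E₁, hE₁, h1E₁, hE₁E₁⟩ := exists_open_nhds_one_mul_subset hE₀1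
  obtain ⟨E₂, hE₂, h1E₂, hE₂E₁⟩ := hQ.exists_isOpen_one_mem_conj_subset hE₁ h1E₁
  have hmul : (Q : Set H) * E₂ * ((Q : Set H) * E₁) ⊆ (Q : Set H) * E₀ := by
    rintro _ ⟨_, ⟨q, hq, e, he, rfl⟩, _, ⟨q', hq', e', he', rfl⟩, rfl⟩
    exact ⟨q * q', Q.mul_mem hq hq', q'⁻¹ * e * q' * e',
      hE₁E₁ (mul_mem_mul (hE₂E₁ e he q' hq') he'), by group⟩
  have hsub : (Q : Set H) * E₂ ⊆ (Q : Set H) * E₀ := fun x hx => by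
    simpa using hmul (mul_mem_mul hx (mul_mem_mul Q.one_mem h1E₁))
  obtain ⟨M, hβM, hM⟩ := ((h.eventually_mapsTo hβ hE₁.mul_left
    (fun q hq => ⟨q, hq, 1, h1E₁, mul_one q⟩) (hQ.mul hE₀)).and (eventually_gt_atTop 0)).exists
  set O := ⋂ m ∈ Iic M, (cocycle β · m) ⁻¹' ((Q : Set H) * E₂)
  have hO : IsOpen O := (finite_Iic M).isOpen_biInter fun m _ =>
    hE₂.mul_left.preimage (continuous_cocycle hβ m)
  have hQO : compactCore β ⊆ O := fun q hq =>
    mem_iInter₂.2 fun m _ => ⟨_, cocycle_mem β hβQ hq m, 1, h1E₂, mul_one _⟩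
  obtain ⟨T, hT⟩ := (h.eventually_mapsTo hβ hO hQO isCompact_singleton).exists
  exact exists_isCompact_cocycle_mem_of_iterate T (hQ.mul hE₀) <|
    cocycle_mem_of_mul_subset β hM hβM hmul hsub fun m hm => mem_iInter₂.1 (hT rfl) m hm

theorem CompactingFun.conj {β : MulAut H} (hβ : Continuous β) (h : CompactingFun β) (y : H) :
    CompactingFun fun x => y * β x * y⁻¹ := by
  obtain ⟨B, hB, hyB⟩ := h.exists_isCompact_cocycle_mem hβ y
  obtain ⟨V, hV, hVabs⟩ := h
  refine ⟨B * V * B⁻¹, (hB.mul hV).mul hB.inv, fun x => ?_⟩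
  obtain ⟨N, hN⟩ := hVabs x
  refine ⟨N, fun n hn => ?_⟩
  rw [iterate_conj_apply]
  exact mul_mem_mul (mul_mem_mul (hyB n) (hN n hn)) (inv_mem_inv.2 (hyB n))

end TopologicalGroup

theorem stmt_18_general {H : Type*} [Group H] [TopologicalSpace H] [IsTopologicalGroup H]
    [LocallyCompactSpace H] [T2Space H]
    -- a continuous one-parameter group of automorphisms (the `ℝ`-action of `G = H ⋊ ℝ`)
    (α : ℝ → MulAut H) (hα : ∀ s t : ℝ, α (s + t) = α s * α t)
    (hαcont : Continuous fun p : ℝ × H => α p.1 p.2) :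
    -- `Λ = ℝ`: if some `α_t`, `t > 0`, is a compaction, then all are
    ((∃ t : ℝ, 0 < t ∧ CompactingFun ⇑(α t)) →
      ∀ t : ℝ, 0 < t → CompactingFun ⇑(α t)) ∧
    -- `Λ = ℤ`: same statement for actions of `ℤ`
    (∀ αz : ℤ → MulAut H, (∀ m k : ℤ, αz (m + k) = αz m * αz k) →
      (∀ m : ℤ, Continuous ⇑(αz m)) →
      (∃ m : ℤ, 0 < m ∧ CompactingFun ⇑(αz m)) →
      ∀ m : ℤ, 0 < m → CompactingFun ⇑(αz m)) ∧
    -- composing a compaction with an inner automorphism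
    ((∀ N : Subgroup H, N.Normal → IsCompact (N : Set H) → N = ⊥) →
      (∃ M K : Subgroup H, M.Normal ∧ IsCompact (K : Set H) ∧ M ⊓ K = ⊥ ∧
        (M : Set H) * (K : Set H) = Set.univ) →
      ∀ β : MulAut H, Continuous ⇑β → CompactingFun ⇑β →
        ∀ x : H, CompactingFun (⇑β ∘ fun h => x * h * x⁻¹)) := by
  refine ⟨fun ⟨s, hs, h⟩ t ht => h.of_mulAut_map_add hα hαcont hs ht,
    fun αz hαz hcont ⟨m, hm, h⟩ n hn =>
      h.of_mulAut_map_add hαz (continuous_prod_of_discrete_left.2 hcont) hm hn,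
    fun _ _ β hβ h x => ?_⟩
  have hconj : (⇑β ∘ fun h => x * h * x⁻¹) = fun h => β x * β h * (β x)⁻¹ := by
    funext h
    simp
  rw [hconj]
  exact h.conj hβ (β x)

/-- Let `H` be a connected-by-compact locally compact group and `(α_t)` an action of
`Λ ∈ {ℝ, ℤ}` on `H` (coming from a semidirect product `G = H ⋊ Λ`).  If `α_t` is a
compaction for some `t > 0` then it is a compaction for every `t > 0` (both for `Λ = ℝ` and
`Λ = ℤ`).  Moreover, if `H` has no nontrivial compact normal subgroup and splits as
`M ⋊ K` with `K` compact, then composing a compaction of `H` with an inner automorphism of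
`H` again yields a compaction. -/
theorem stmt_18 {H : Type*} [Group H] [TopologicalSpace H] [IsTopologicalGroup H]
    [LocallyCompactSpace H] [T2Space H]
    -- `H` is connected-by-compact
    (hcbc : ∃ K : Set H, IsCompact K ∧ Set.univ ⊆ connectedComponent (1 : H) * K)
    -- a continuous one-parameter group of automorphisms (the `ℝ`-action of `G = H ⋊ ℝ`)
    (α : ℝ → MulAut H) (hα : ∀ s t : ℝ, α (s + t) = α s * α t)
    (hαcont : Continuous fun p : ℝ × H => α p.1 p.2) :
    -- `Λ = ℝ`: if some `α_t`, `t > 0`, is a compaction, then all are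
    ((∃ t : ℝ, 0 < t ∧ CompactingFun ⇑(α t)) →
      ∀ t : ℝ, 0 < t → CompactingFun ⇑(α t)) ∧
    -- `Λ = ℤ`: same statement for actions of `ℤ`
    (∀ αz : ℤ → MulAut H, (∀ m k : ℤ, αz (m + k) = αz m * αz k) →
      (∀ m : ℤ, Continuous ⇑(αz m)) →
      (∃ m : ℤ, 0 < m ∧ CompactingFun ⇑(αz m)) →
      ∀ m : ℤ, 0 < m → CompactingFun ⇑(αz m)) ∧
    -- composing a compaction with an inner automorphism
    ((∀ N : Subgroup H, N.Normal → IsCompact (N : Set H) → N = ⊥) →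
      (∃ M K : Subgroup H, M.Normal ∧ IsCompact (K : Set H) ∧ M ⊓ K = ⊥ ∧
        (M : Set H) * (K : Set H) = Set.univ) →
      ∀ β : MulAut H, Continuous ⇑β → CompactingFun ⇑β →
        ∀ x : H, CompactingFun (⇑β ∘ fun h => x * h * x⁻¹)) :=
  stmt_18_general α hα hαcont
end
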